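/- arXiv:1205.2834 — 10 statements merged into one kernel-verified Lean document; each statement's English description precedes it below -/
import Mathlib

section
/- Let n ≥ 1, let 0 < β ≤ 1/2, 0 < δ ≤ 1/2 and c > 0, and let π : ℝⁿ → ℝ be a measurable function satisfying 0 ≤ π(y) ≤ c(‖y‖^{-n-2β} + ‖y‖^{-n-2δ}) for all y ≠ 0. Then there exists a constant C > 0, depending only on n, β, δ and c, such that for every ξ ∈ ℝⁿ one has ∫_{ℝⁿ} (1 − cos⟨ξ, y⟩) π(y) dy ≤ C (‖ξ‖^{2β} + ‖ξ‖^{2δ}). -/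
/-!
Since `1 - cos s ≤ min (2, s² / 2)` and `|⟪ξ, y⟫| ≤ ‖ξ‖ ‖y‖`, the integrand against the model
kernel `‖y‖ ^ (-d - 2α)` is dominated by `min (2, ‖‖ξ‖ y‖² / 2) ‖y‖ ^ (-d - 2α)`. The substitution
`x = ‖ξ‖ y` turns the integral of this majorant into `‖ξ‖ ^ (2α)` times the integral of
`min (2, ‖x‖² / 2) ‖x‖ ^ (-d - 2α)`, which is finite for `0 < α < 1`: in polar coordinates its
radial density is `O(r ^ (1 - 2α))` near `0` and `O(r ^ (-1 - 2α))` at infinity.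
-/

open MeasureTheory Module Set
open scoped RealInnerProductSpace

theorem Real.one_sub_cos_le_min_sq (x : ℝ) : 1 - Real.cos x ≤ min 2 (x ^ 2 / 2) :=
  le_min (by linarith [Real.neg_one_le_cos x])
    (by linarith [Real.one_sub_sq_div_two_le_cos (x := x)])

section

variable {E : Type*} [NormedAddCommGroup E]

noncomputable def truncatedKernel (p : ℝ) (x : E) : ℝ := min 2 (‖x‖ ^ 2 / 2) * ‖x‖ ^ p

theorem truncatedKernel_nonneg (p : ℝ) (x : E) : 0 ≤ truncatedKernel p x := by
  unfold truncatedKernel; positivity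

theorem integrable_truncatedKernel [NormedSpace ℝ E] [FiniteDimensional ℝ E] [Nontrivial E]
    [MeasurableSpace E] [BorelSpace E] (μ : Measure E) [μ.IsAddHaarMeasure]
    {α : ℝ} (hα0 : 0 < α) (hα1 : α < 1) :
    Integrable (truncatedKernel (-(finrank ℝ E : ℝ) - 2 * α)) μ := by
  set d := finrank ℝ E
  have hd : 1 ≤ d := finrank_pos
  have hradial : ∀ r : ℝ, 0 < r → r ^ (d - 1) • (min 2 (r ^ 2 / 2) * r ^ (-(d : ℝ) - 2 * α))
      = min 2 (r ^ 2 / 2) * r ^ (-1 - 2 * α) := by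
    intro r hr
    rw [smul_eq_mul, mul_left_comm, ← Real.rpow_natCast r (d - 1), ← Real.rpow_add hr,
      Nat.cast_sub hd, Nat.cast_one]
    ring_nf
  refine (integrable_fun_norm_addHaar μ
    (f := fun r ↦ min 2 (r ^ 2 / 2) * r ^ (-(d : ℝ) - 2 * α))).2 ?_
  have hmeas : AEStronglyMeasurable
      (fun r : ℝ ↦ r ^ (d - 1) • (min 2 (r ^ 2 / 2) * r ^ (-(d : ℝ) - 2 * α))) := by
    fun_prop
  rw [← Ioc_union_Ioi_eq_Ioi zero_le_one]
  refine IntegrableOn.union ?_ ?_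
  · have hrpow : IntegrableOn (fun r : ℝ ↦ r ^ (1 - 2 * α)) (Ioc 0 1) :=
      (integrableOn_Ioc_iff_integrableOn_Ioo (by simp)).2 <|
        (intervalIntegral.integrableOn_Ioo_rpow_iff one_pos).2 (by linarith)
    have hint : IntegrableOn (fun r : ℝ ↦ r ^ (1 - 2 * α) / 2) (Ioc 0 1) := hrpow.div_const 2
    refine hint.mono' hmeas.restrict (ae_restrict_of_forall_mem measurableSet_Ioc fun r hr ↦ ?_)
    have hr0 : 0 < r := hr.1
    rw [hradial r hr0, Real.norm_of_nonneg (by positivity)]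
    calc min 2 (r ^ 2 / 2) * r ^ (-1 - 2 * α) ≤ r ^ 2 / 2 * r ^ (-1 - 2 * α) :=
          mul_le_mul_of_nonneg_right (min_le_right _ _) (by positivity)
      _ = r ^ (1 - 2 * α) / 2 := by
        rw [← Real.rpow_two, div_mul_eq_mul_div, ← Real.rpow_add hr0]; ring_nf
  · have hint : IntegrableOn (fun r : ℝ ↦ 2 * r ^ (-1 - 2 * α)) (Ioi 1) :=
      (integrableOn_Ioi_rpow_of_lt (by linarith) one_pos).const_mul 2
    refine hint.mono' hmeas.restrict (ae_restrict_of_forall_mem measurableSet_Ioi fun r hr ↦ ?_)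
    have hr0 : (0 : ℝ) < r := one_pos.trans hr
    rw [hradial r hr0, Real.norm_of_nonneg (by positivity)]
    exact mul_le_mul_of_nonneg_right (min_le_left _ _) (by positivity)

variable [InnerProductSpace ℝ E]

theorem one_sub_cos_inner_le (ξ y : E) : 1 - Real.cos ⟪ξ, y⟫ ≤ min 2 (‖‖ξ‖ • y‖ ^ 2 / 2) := by
  refine (Real.one_sub_cos_le_min_sq _).trans (min_le_min_left _ ?_)
  have : |⟪ξ, y⟫| ≤ ‖‖ξ‖ • y‖ := by
    rw [norm_smul, norm_norm]; exact abs_real_inner_le_norm ξ y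
  linarith [sq_le_sq' (abs_le.1 this).1 (abs_le.1 this).2]

theorem one_sub_cos_inner_mul_rpow_le {ξ : E} (hξ : ξ ≠ 0) (p : ℝ) (y : E) :
    (1 - Real.cos ⟪ξ, y⟫) * ‖y‖ ^ p ≤ ‖ξ‖ ^ (-p) * truncatedKernel p (‖ξ‖ • y) := by
  have ht : 0 < ‖ξ‖ := norm_pos_iff.2 hξ
  have hscale : ‖ξ‖ ^ (-p) * ‖‖ξ‖ • y‖ ^ p = ‖y‖ ^ p := by
    rw [norm_smul, norm_norm, Real.mul_rpow ht.le (norm_nonneg y), ← mul_assoc,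
      ← Real.rpow_add ht, neg_add_cancel, Real.rpow_zero, one_mul]
  calc (1 - Real.cos ⟪ξ, y⟫) * ‖y‖ ^ p
      ≤ min 2 (‖‖ξ‖ • y‖ ^ 2 / 2) * ‖y‖ ^ p := by gcongr; exact one_sub_cos_inner_le ξ y
    _ = ‖ξ‖ ^ (-p) * truncatedKernel p (‖ξ‖ • y) := by
      rw [truncatedKernel, ← hscale]; ring

variable [FiniteDimensional ℝ E] [Nontrivial E] [MeasurableSpace E] [BorelSpace E]
  (μ : Measure E) [μ.IsAddHaarMeasure]

theorem integrable_one_sub_cos_inner_mul_rpow {α : ℝ} (hα0 : 0 < α) (hα1 : α < 1) (ξ : E) :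
    Integrable (fun y ↦ (1 - Real.cos ⟪ξ, y⟫) * ‖y‖ ^ (-(finrank ℝ E : ℝ) - 2 * α)) μ := by
  rcases eq_or_ne ξ 0 with rfl | hξ
  · simp
  refine (((integrable_truncatedKernel μ hα0 hα1).comp_smul (norm_ne_zero_iff.2 hξ)).const_mul
    (‖ξ‖ ^ (-(-(finrank ℝ E : ℝ) - 2 * α)))).mono' (by fun_prop) (ae_of_all _ fun y ↦ ?_)
  rw [Real.norm_of_nonneg (mul_nonneg (by linarith [Real.cos_le_one ⟪ξ, y⟫]) (by positivity))]
  exact one_sub_cos_inner_mul_rpow_le hξ _ y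

theorem integral_one_sub_cos_inner_mul_rpow_le {α : ℝ} (hα0 : 0 < α) (hα1 : α < 1) (ξ : E) :
    ∫ y, (1 - Real.cos ⟪ξ, y⟫) * ‖y‖ ^ (-(finrank ℝ E : ℝ) - 2 * α) ∂μ
      ≤ ‖ξ‖ ^ (2 * α) * ∫ x, truncatedKernel (-(finrank ℝ E : ℝ) - 2 * α) x ∂μ := by
  set p := -(finrank ℝ E : ℝ) - 2 * α
  rcases eq_or_ne ξ 0 with rfl | hξ
  · simp [Real.zero_rpow (by positivity : 2 * α ≠ 0)]
  have ht : 0 < ‖ξ‖ := norm_pos_iff.2 hξ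
  calc ∫ y, (1 - Real.cos ⟪ξ, y⟫) * ‖y‖ ^ p ∂μ
      ≤ ∫ y, ‖ξ‖ ^ (-p) * truncatedKernel p (‖ξ‖ • y) ∂μ :=
        integral_mono (integrable_one_sub_cos_inner_mul_rpow μ hα0 hα1 ξ)
          (((integrable_truncatedKernel μ hα0 hα1).comp_smul ht.ne').const_mul _)
          (one_sub_cos_inner_mul_rpow_le hξ p)
    _ = ‖ξ‖ ^ (-p) * (‖ξ‖ ^ finrank ℝ E)⁻¹ * ∫ x, truncatedKernel p x ∂μ := by
      rw [integral_const_mul, Measure.integral_comp_smul_of_nonneg μ _ _ (hR := ht.le),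
        smul_eq_mul, mul_assoc]
    _ = ‖ξ‖ ^ (2 * α) * ∫ x, truncatedKernel p x ∂μ := by
      rw [← Real.rpow_natCast, ← Real.rpow_neg ht.le, ← Real.rpow_add ht,
        show -p + -(finrank ℝ E : ℝ) = 2 * α by simp only [p]; ring]

theorem lintegral_one_sub_cos_inner_mul_le {β δ c : ℝ} (hβ0 : 0 < β) (hβ1 : β < 1)
    (hδ0 : 0 < δ) (hδ1 : δ < 1) (hc : 0 ≤ c) {π : E → ℝ} (hπ0 : ∀ y, 0 ≤ π y)
    (hπub : ∀ y, y ≠ 0 →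
      π y ≤ c * (‖y‖ ^ (-(finrank ℝ E : ℝ) - 2 * β) + ‖y‖ ^ (-(finrank ℝ E : ℝ) - 2 * δ)))
    (ξ : E) :
    ∫⁻ y, ENNReal.ofReal ((1 - Real.cos ⟪ξ, y⟫) * π y) ∂μ ≤ ENNReal.ofReal (c *
      (‖ξ‖ ^ (2 * β) * ∫ x, truncatedKernel (-(finrank ℝ E : ℝ) - 2 * β) x ∂μ
        + ‖ξ‖ ^ (2 * δ) * ∫ x, truncatedKernel (-(finrank ℝ E : ℝ) - 2 * δ) x ∂μ)) := by
  set g : ℝ → E → ℝ := fun α y ↦ (1 - Real.cos ⟪ξ, y⟫) * ‖y‖ ^ (-(finrank ℝ E : ℝ) - 2 * α)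
  have hcos : ∀ y, 0 ≤ 1 - Real.cos ⟪ξ, y⟫ := fun y ↦ by linarith [Real.cos_le_one ⟪ξ, y⟫]
  have hpoint : ∀ y, (1 - Real.cos ⟪ξ, y⟫) * π y ≤ c * (g β y + g δ y) := by
    intro y
    rcases eq_or_ne y 0 with rfl | hy
    · simp [g]
    calc (1 - Real.cos ⟪ξ, y⟫) * π y
        ≤ (1 - Real.cos ⟪ξ, y⟫) * (c * (‖y‖ ^ (-(finrank ℝ E : ℝ) - 2 * β)
            + ‖y‖ ^ (-(finrank ℝ E : ℝ) - 2 * δ))) :=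
          mul_le_mul_of_nonneg_left (hπub y hy) (hcos y)
      _ = c * (g β y + g δ y) := by ring
  have hintβ := integrable_one_sub_cos_inner_mul_rpow μ hβ0 hβ1 ξ
  have hintδ := integrable_one_sub_cos_inner_mul_rpow μ hδ0 hδ1 ξ
  calc ∫⁻ y, ENNReal.ofReal ((1 - Real.cos ⟪ξ, y⟫) * π y) ∂μ
      ≤ ∫⁻ y, ENNReal.ofReal (c * (g β y + g δ y)) ∂μ :=
        lintegral_mono fun y ↦ ENNReal.ofReal_le_ofReal (hpoint y)
    _ = ENNReal.ofReal (∫ y, c * (g β y + g δ y) ∂μ) :=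
        (ofReal_integral_eq_lintegral_ofReal ((hintβ.add hintδ).const_mul c)
          (ae_of_all _ fun y ↦ (mul_nonneg (hcos y) (hπ0 y)).trans (hpoint y))).symm
    _ ≤ _ := by
      rw [integral_const_mul, integral_add hintβ hintδ]
      exact ENNReal.ofReal_le_ofReal <| mul_le_mul_of_nonneg_left
        (add_le_add (integral_one_sub_cos_inner_mul_rpow_le μ hβ0 hβ1 ξ)
          (integral_one_sub_cos_inner_mul_rpow_le μ hδ0 hδ1 ξ)) hc

end

theorem levy_symbol_upper_bound_general
    (n : ℕ) (hn : 1 ≤ n) (β δ c : ℝ)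
    (hβ0 : 0 < β) (hβ : β ≤ 1 / 2) (hδ0 : 0 < δ) (hδ : δ ≤ 1 / 2) (hc : 0 < c)
    (π : EuclideanSpace ℝ (Fin n) → ℝ)
    (hπ0 : ∀ y, 0 ≤ π y)
    (hπub : ∀ y : EuclideanSpace ℝ (Fin n), y ≠ 0 →
      π y ≤ c * (‖y‖ ^ (-(n : ℝ) - 2 * β) + ‖y‖ ^ (-(n : ℝ) - 2 * δ))) :
    ∃ C : ℝ, 0 < C ∧ ∀ ξ : EuclideanSpace ℝ (Fin n),
      (∫⁻ y, ENNReal.ofReal ((1 - Real.cos ⟪ξ, y⟫) * π y))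
        ≤ ENNReal.ofReal (C * (‖ξ‖ ^ (2 * β) + ‖ξ‖ ^ (2 * δ))) := by
  have : NeZero n := ⟨by omega⟩
  set K : ℝ → ℝ :=
    fun α ↦ ∫ x : EuclideanSpace ℝ (Fin n), truncatedKernel (-(n : ℝ) - 2 * α) x
  have hK : ∀ α, 0 ≤ K α := fun α ↦ integral_nonneg (truncatedKernel_nonneg _)
  refine ⟨c * (K β + K δ) + 1, by have := hK β; have := hK δ; positivity, fun ξ ↦ ?_⟩
  have h := lintegral_one_sub_cos_inner_mul_le volume hβ0 (by linarith) hδ0 (by linarith)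
    hc.le hπ0 (by simpa using hπub) ξ
  simp only [finrank_euclideanSpace_fin] at h
  refine h.trans (ENNReal.ofReal_le_ofReal ?_)
  have ha : 0 ≤ ‖ξ‖ ^ (2 * β) := by positivity
  have hb : 0 ≤ ‖ξ‖ ^ (2 * δ) := by positivity
  nlinarith [mul_nonneg (mul_nonneg hc.le (hK δ)) ha, mul_nonneg (mul_nonneg hc.le (hK β)) hb]

/-- Upper bound on the Lévy–Khinchin symbol associated to a kernel `π` dominated by
`c (‖y‖^(-n-2β) + ‖y‖^(-n-2δ))`. -/
theorem levy_symbol_upper_bound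
    (n : ℕ) (hn : 1 ≤ n) (β δ c : ℝ)
    (hβ0 : 0 < β) (hβ : β ≤ 1 / 2) (hδ0 : 0 < δ) (hδ : δ ≤ 1 / 2) (hc : 0 < c)
    (π : EuclideanSpace ℝ (Fin n) → ℝ) (hπmeas : Measurable π)
    (hπ0 : ∀ y, 0 ≤ π y)
    (hπub : ∀ y : EuclideanSpace ℝ (Fin n), y ≠ 0 →
      π y ≤ c * (‖y‖ ^ (-(n : ℝ) - 2 * β) + ‖y‖ ^ (-(n : ℝ) - 2 * δ))) :
    ∃ C : ℝ, 0 < C ∧ ∀ ξ : EuclideanSpace ℝ (Fin n),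
      (∫⁻ y, ENNReal.ofReal ((1 - Real.cos ⟪ξ, y⟫) * π y))
        ≤ ENNReal.ofReal (C * (‖ξ‖ ^ (2 * β) + ‖ξ‖ ^ (2 * δ))) :=
  levy_symbol_upper_bound_general n hn β δ c hβ0 hβ hδ0 hδ hc π hπ0 hπub
end

section
/- Let n ≥ 1, let 0 < α ≤ 1/2 and c₁ > 0, and let π : ℝⁿ → ℝ be a measurable function with π ≥ 0 everywhere and π(y) ≥ c₁‖y‖^{-n-2α} for all y with 0 < ‖y‖ ≤ 1. Then there exist constants C₁ > 0 and C₂ > 0, depending only on n, α and c₁, such that for every ξ ∈ ℝⁿ one has ‖ξ‖^{2α} ≤ C₁ ∫_{ℝⁿ} (1 − cos⟨ξ, y⟩) π(y) dy + C₂. -/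
/-!
The phase `⟪ξ, y⟫` lies in `[2, 4]`, where the cosine is nonpositive, so `1 - cos ⟪ξ, y⟫ ≥ 1`
on the ball of radius `‖ξ‖⁻¹` centred at `3 ξ / ‖ξ‖²`. That ball lies within distance `4 / ‖ξ‖`
of the origin, so for `‖ξ‖ ≥ 4` the kernel is at least `c₁ (4 / ‖ξ‖)^(-n-2α)` there, and it has
volume proportional to `‖ξ‖^(-n)`. Hence the symbol is at least a constant times `‖ξ‖^(2α)`
for `‖ξ‖ ≥ 4`, while `‖ξ‖ ≤ 4` is covered by `C₂ = 4^(2α)`.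
-/

open MeasureTheory Metric Module Set
open scoped RealInnerProductSpace

section PhaseBall

variable {E : Type*} [NormedAddCommGroup E] [InnerProductSpace ℝ E]

def phaseBall (ξ : E) : Set E := closedBall ((3 / ‖ξ‖ ^ 2) • ξ) ‖ξ‖⁻¹

variable {ξ y : E}

theorem inner_mem_Icc_of_mem_phaseBall (hξ : ξ ≠ 0) (hy : y ∈ phaseBall ξ) :
    ⟪ξ, y⟫ ∈ Icc (2 : ℝ) 4 := by
  have hR : 0 < ‖ξ‖ := norm_pos_iff.2 hξ
  have hcenter : ⟪ξ, (3 / ‖ξ‖ ^ 2) • ξ⟫ = 3 := by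
    rw [real_inner_smul_right, real_inner_self_eq_norm_sq]
    field_simp
  have hdev : |⟪ξ, y - (3 / ‖ξ‖ ^ 2) • ξ⟫| ≤ 1 :=
    calc |⟪ξ, y - (3 / ‖ξ‖ ^ 2) • ξ⟫| ≤ ‖ξ‖ * ‖y - (3 / ‖ξ‖ ^ 2) • ξ‖ :=
          abs_real_inner_le_norm _ _
      _ ≤ ‖ξ‖ * ‖ξ‖⁻¹ := by gcongr; exact mem_closedBall_iff_norm.1 hy
      _ = 1 := mul_inv_cancel₀ hR.ne'
  rw [inner_sub_right, hcenter, abs_le] at hdev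
  constructor <;> linarith

theorem one_le_one_sub_cos_of_mem_phaseBall (hξ : ξ ≠ 0) (hy : y ∈ phaseBall ξ) :
    1 ≤ 1 - Real.cos ⟪ξ, y⟫ := by
  obtain ⟨h2, h4⟩ := inner_mem_Icc_of_mem_phaseBall hξ hy
  have : Real.cos ⟪ξ, y⟫ ≤ 0 :=
    Real.cos_nonpos_of_pi_div_two_le_of_le (by linarith [Real.pi_le_four])
      (by linarith [Real.pi_gt_three])
  linarith

theorem ne_zero_of_mem_phaseBall (hξ : ξ ≠ 0) (hy : y ∈ phaseBall ξ) : y ≠ 0 := by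
  rintro rfl
  have := (inner_mem_Icc_of_mem_phaseBall hξ hy).1
  rw [inner_zero_right] at this
  norm_num at this

theorem norm_le_of_mem_phaseBall (hξ : ξ ≠ 0) (hy : y ∈ phaseBall ξ) : ‖y‖ ≤ 4 / ‖ξ‖ := by
  have hR : 0 < ‖ξ‖ := norm_pos_iff.2 hξ
  have hcenter : ‖(3 / ‖ξ‖ ^ 2) • ξ‖ = 3 / ‖ξ‖ := by
    rw [norm_smul, Real.norm_of_nonneg (by positivity)]
    field_simp
  calc ‖y‖ ≤ ‖(3 / ‖ξ‖ ^ 2) • ξ‖ + ‖y - (3 / ‖ξ‖ ^ 2) • ξ‖ := norm_le_insert' _ _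
    _ ≤ 3 / ‖ξ‖ + ‖ξ‖⁻¹ := by rw [hcenter]; gcongr; exact mem_closedBall_iff_norm.1 hy
    _ = 4 / ‖ξ‖ := by ring

variable [FiniteDimensional ℝ E] [MeasurableSpace E] [BorelSpace E]
  (μ : Measure E) [μ.IsAddHaarMeasure]

theorem measure_phaseBall (ξ : E) :
    μ (phaseBall ξ) = ENNReal.ofReal (‖ξ‖⁻¹ ^ finrank ℝ E) * μ (ball 0 1) :=
  Measure.addHaar_closedBall μ _ (inv_nonneg.2 (norm_nonneg ξ))

end PhaseBall

theorem div_rpow_neg_sub_mul_inv_rpow {a R : ℝ} (d s : ℝ) (ha : 0 ≤ a) (hR : 0 < R) :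
    (a / R) ^ (-d - s) * R⁻¹ ^ d = a ^ (-d - s) * R ^ s := by
  rw [Real.div_rpow ha hR.le, Real.inv_rpow hR.le, div_mul_eq_mul_div, mul_div_assoc,
    div_eq_mul_inv, ← mul_inv, ← Real.rpow_add hR, show d + (-d - s) = -s by ring, Real.rpow_neg hR.le, inv_inv]

section LowerBound

variable {E : Type*} [NormedAddCommGroup E] [InnerProductSpace ℝ E] [FiniteDimensional ℝ E]
  [MeasurableSpace E] [BorelSpace E] (μ : Measure E) [μ.IsAddHaarMeasure]

theorem le_lintegral_one_sub_cos_inner_mul {f : E → ℝ} {c s : ℝ}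
    (hc : 0 < c) (hs : 0 ≤ s)
    (hf : ∀ y, y ≠ 0 → ‖y‖ ≤ 1 → c * ‖y‖ ^ (-(finrank ℝ E : ℝ) - s) ≤ f y)
    {ξ : E} (hξ : 4 ≤ ‖ξ‖) :
    ENNReal.ofReal (c * 4 ^ (-(finrank ℝ E : ℝ) - s) * ‖ξ‖ ^ s) * μ (ball 0 1) ≤
      ∫⁻ y, ENNReal.ofReal ((1 - Real.cos ⟪ξ, y⟫) * f y) ∂μ := by
  set p : ℝ := -(finrank ℝ E : ℝ) - s
  have hp : p ≤ 0 := by have : (0 : ℝ) ≤ finrank ℝ E := Nat.cast_nonneg _; linarith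
  have hR : 0 < ‖ξ‖ := by linarith
  have hξ0 : ξ ≠ 0 := norm_pos_iff.1 hR
  have hpoint : ∀ y ∈ phaseBall ξ, c * (4 / ‖ξ‖) ^ p ≤ (1 - Real.cos ⟪ξ, y⟫) * f y := by
    intro y hy
    have hy0 := ne_zero_of_mem_phaseBall hξ0 hy
    have hy4 := norm_le_of_mem_phaseBall hξ0 hy
    have hy1 : ‖y‖ ≤ 1 := hy4.trans ((div_le_one hR).2 hξ)
    have hfy : c * (4 / ‖ξ‖) ^ p ≤ f y :=
      calc c * (4 / ‖ξ‖) ^ p ≤ c * ‖y‖ ^ p :=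
            mul_le_mul_of_nonneg_left
              (Real.rpow_le_rpow_of_nonpos (norm_pos_iff.2 hy0) hy4 hp) hc.le
        _ ≤ f y := hf y hy0 hy1
    exact hfy.trans (le_mul_of_one_le_left (le_trans (by positivity) hfy)
      (one_le_one_sub_cos_of_mem_phaseBall hξ0 hy))
  calc ENNReal.ofReal (c * 4 ^ p * ‖ξ‖ ^ s) * μ (ball 0 1)
      = ENNReal.ofReal (c * (4 / ‖ξ‖) ^ p) * μ (phaseBall ξ) := by
        rw [measure_phaseBall, ← mul_assoc, ← ENNReal.ofReal_mul (by positivity)]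
        conv_rhs => rw [mul_assoc, ← Real.rpow_natCast, div_rpow_neg_sub_mul_inv_rpow _ _ zero_le_four hR,
          ← mul_assoc]
    _ = ∫⁻ _ in phaseBall ξ, ENNReal.ofReal (c * (4 / ‖ξ‖) ^ p) ∂μ := (setLIntegral_const _ _).symm
    _ ≤ ∫⁻ y in phaseBall ξ, ENNReal.ofReal ((1 - Real.cos ⟪ξ, y⟫) * f y) ∂μ :=
        setLIntegral_mono' isClosed_closedBall.measurableSet
          fun y hy => ENNReal.ofReal_le_ofReal (hpoint y hy)
    _ ≤ ∫⁻ y, ENNReal.ofReal ((1 - Real.cos ⟪ξ, y⟫) * f y) ∂μ := setLIntegral_le_lintegral _ _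

end LowerBound

theorem levy_symbol_lower_bound_general
    (n : ℕ) (α c₁ : ℝ) (hα0 : 0 < α) (hc₁ : 0 < c₁)
    (π : EuclideanSpace ℝ (Fin n) → ℝ)
    (hπlb : ∀ y : EuclideanSpace ℝ (Fin n), y ≠ 0 → ‖y‖ ≤ 1 →
      c₁ * ‖y‖ ^ (-(n : ℝ) - 2 * α) ≤ π y) :
    ∃ C₁ C₂ : ℝ, 0 < C₁ ∧ 0 < C₂ ∧ ∀ ξ : EuclideanSpace ℝ (Fin n),
      ENNReal.ofReal (‖ξ‖ ^ (2 * α)) ≤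
        ENNReal.ofReal C₁ * (∫⁻ y, ENNReal.ofReal ((1 - Real.cos ⟪ξ, y⟫) * π y))
          + ENNReal.ofReal C₂ := by
  set B := (volume (ball (0 : EuclideanSpace ℝ (Fin n)) 1)).toReal
  have hB : 0 < B := ENNReal.toReal_pos (measure_ball_pos _ _ one_pos).ne' measure_ball_lt_top.ne
  set K := c₁ * 4 ^ (-(n : ℝ) - 2 * α) * B
  have hK : 0 < K := by positivity
  refine ⟨K⁻¹, 4 ^ (2 * α), inv_pos.2 hK, by positivity, fun ξ => ?_⟩
  rcases le_or_gt ‖ξ‖ 4 with hξ | hξ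
  · calc ENNReal.ofReal (‖ξ‖ ^ (2 * α)) ≤ ENNReal.ofReal (4 ^ (2 * α)) := by gcongr
      _ ≤ _ := le_add_self
  · have hmain := le_lintegral_one_sub_cos_inner_mul volume hc₁ (by positivity : (0 : ℝ) ≤ 2 * α)
      (by simpa only [finrank_euclideanSpace_fin] using hπlb) hξ.le
    rw [finrank_euclideanSpace_fin, ← ENNReal.ofReal_toReal measure_ball_lt_top.ne,
      ← ENNReal.ofReal_mul (by positivity)] at hmain
    calc ENNReal.ofReal (‖ξ‖ ^ (2 * α))
        = ENNReal.ofReal K⁻¹ * ENNReal.ofReal (K * ‖ξ‖ ^ (2 * α)) := by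
          rw [← ENNReal.ofReal_mul (by positivity), inv_mul_cancel_left₀ hK.ne']
      _ ≤ ENNReal.ofReal K⁻¹ * ∫⁻ y, ENNReal.ofReal ((1 - Real.cos ⟪ξ, y⟫) * π y) := by
          gcongr
          refine Eq.trans_le ?_ hmain
          congr 1
          ring
      _ ≤ _ := le_self_add

/-- Lower bound `‖ξ‖^(2α) ≤ C₁ a(ξ) + C₂` for the Lévy–Khinchin symbol of a kernel `π`
bounded below by `c₁ ‖y‖^(-n-2α)` near the origin. -/
theorem levy_symbol_lower_bound
    (n : ℕ) (hn : 1 ≤ n) (α c₁ : ℝ) (hα0 : 0 < α) (hα : α ≤ 1 / 2) (hc₁ : 0 < c₁)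
    (π : EuclideanSpace ℝ (Fin n) → ℝ) (hπmeas : Measurable π) (hπ0 : ∀ y, 0 ≤ π y)
    (hπlb : ∀ y : EuclideanSpace ℝ (Fin n), y ≠ 0 → ‖y‖ ≤ 1 →
      c₁ * ‖y‖ ^ (-(n : ℝ) - 2 * α) ≤ π y) :
    ∃ C₁ C₂ : ℝ, 0 < C₁ ∧ 0 < C₂ ∧ ∀ ξ : EuclideanSpace ℝ (Fin n),
      ENNReal.ofReal (‖ξ‖ ^ (2 * α)) ≤
        ENNReal.ofReal C₁ * (∫⁻ y, ENNReal.ofReal ((1 - Real.cos ⟪ξ, y⟫) * π y))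
          + ENNReal.ofReal C₂ :=
  levy_symbol_lower_bound_general n α c₁ hα0 hc₁ π hπlb
end

section
/- Let n ≥ 1 and 0 < s < 1. For t > 0 let h_t(x) = (4πt)^{-n/2} exp(−‖x‖²/(4t)) be the heat kernel on ℝⁿ. Then there exists a constant C > 0, depending only on n and s, such that for every t > 0, ∫_{ℝⁿ} ∫_{ℝⁿ} |h_t(x) − h_t(x−y)| ‖y‖^{-n-s} dy dx ≤ C t^{-s/2}. -/
/-!
The heat kernel is self-similar, `h_t(x) = t^{-n/2} h_1(t^{-1/2} x)`, while the double integral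
`B(f)` satisfies `B(c f(r ·)) = c r^{s-n} B(f)`; hence `B(h_t) = t^{-s/2} B(h_1)` and it remains to
see that `B(h_1) < ∞`. By Tonelli `B(f) = ∫ ω(y) ‖y‖^{-n-s} dy` with the `L¹` modulus of continuity
`ω(y) = ∫ |f(x) - f(x - y)| dx`. For the Gaussian, `ω(y) ≤ C ‖y‖` when `‖y‖ ≤ 1` (a pointwise
Lipschitz bound with a Gaussian majorant in `x`) and `ω(y) ≤ 2 ‖f‖₁` always, and
`min(1, ‖y‖) ‖y‖^{-n-s}` is integrable precisely because `0 < s < 1`.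
-/

open MeasureTheory Metric Module Real Set
open scoped ENNReal

section NormedGroup

variable {E : Type*} [NormedAddCommGroup E] [MeasurableSpace E]

noncomputable def l1Modulus (μ : Measure E) (f : E → ℝ) (y : E) : ℝ≥0∞ :=
  ∫⁻ x, ENNReal.ofReal |f x - f (x - y)| ∂μ

noncomputable def besovNorm [Module ℝ E] (μ : Measure E) (s : ℝ) (f : E → ℝ) : ℝ≥0∞ :=
  ∫⁻ x, ∫⁻ y, ENNReal.ofReal (|f x - f (x - y)| * ‖y‖ ^ (-(finrank ℝ E : ℝ) - s)) ∂μ ∂μ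

variable {μ : Measure E} {f : E → ℝ}

lemma l1Modulus_le_of_abs_sub_le {G : E → ℝ} {y : E}
    (hG : ∀ x, |f x - f (x - y)| ≤ ‖y‖ * G x) :
    l1Modulus μ f y ≤ ENNReal.ofReal ‖y‖ * ∫⁻ x, ENNReal.ofReal (G x) ∂μ := by
  rw [← lintegral_const_mul' _ _ ENNReal.ofReal_ne_top]
  refine lintegral_mono fun x ↦ ?_
  rw [← ENNReal.ofReal_mul (norm_nonneg y)]
  exact ENNReal.ofReal_le_ofReal (hG x)

lemma l1Modulus_le_two_mul [BorelSpace E] [μ.IsAddRightInvariant] (hf : Measurable f) (y : E) :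
    l1Modulus μ f y ≤ 2 * ∫⁻ x, ENNReal.ofReal |f x| ∂μ := by
  calc l1Modulus μ f y ≤ ∫⁻ x, (ENNReal.ofReal |f x| + ENNReal.ofReal |f (x - y)|) ∂μ := by
        refine lintegral_mono fun x ↦ ?_
        rw [← ENNReal.ofReal_add (abs_nonneg _) (abs_nonneg _)]
        exact ENNReal.ofReal_le_ofReal (abs_sub _ _)
    _ = 2 * ∫⁻ x, ENNReal.ofReal |f x| ∂μ := by
        rw [lintegral_add_left (by fun_prop),
          lintegral_sub_right_eq_self (fun x ↦ ENNReal.ofReal |f x|), two_mul]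

lemma besovNorm_const_mul [Module ℝ E] (s : ℝ) {c : ℝ} (hc : 0 ≤ c) :
    besovNorm μ s (fun x ↦ c * f x) = ENNReal.ofReal c * besovNorm μ s f := by
  simp_rw [besovNorm, ← mul_sub, abs_mul, abs_of_nonneg hc, mul_assoc, ENNReal.ofReal_mul hc,
    lintegral_const_mul' _ _ ENNReal.ofReal_ne_top]

end NormedGroup

section AddHaar

variable {E : Type*} [NormedAddCommGroup E] [NormedSpace ℝ E] [FiniteDimensional ℝ E]
  [MeasurableSpace E] [BorelSpace E] (μ : Measure E) [μ.IsAddHaarMeasure]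

lemma lintegral_comp_smul_of_pos (f : E → ℝ≥0∞) {r : ℝ} (hr : 0 < r) :
    ∫⁻ x, f (r • x) ∂μ = ENNReal.ofReal (r ^ finrank ℝ E)⁻¹ * ∫⁻ x, f x ∂μ := by
  calc ∫⁻ x, f (r • x) ∂μ = ∫⁻ x, f x ∂μ.map (r • ·) :=
        (lintegral_map_equiv f (Homeomorph.smulOfNeZero r hr.ne').toMeasurableEquiv).symm
    _ = _ := by
      rw [Measure.map_addHaar_smul μ hr.ne', lintegral_smul_measure, abs_of_pos (by positivity),
        smul_eq_mul]

lemma besovNorm_comp_smul (s : ℝ) (f : E → ℝ) {r : ℝ} (hr : 0 < r) :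
    besovNorm μ s (fun x ↦ f (r • x)) =
      ENNReal.ofReal (r ^ (s - finrank ℝ E)) * besovNorm μ s f := by
  set F : E → E → ℝ≥0∞ := fun x y ↦
    ENNReal.ofReal (|f x - f (x - y)| * ‖y‖ ^ (-(finrank ℝ E : ℝ) - s))
  set c := ENNReal.ofReal (r ^ finrank ℝ E)⁻¹
  have hF : ∀ x y,
      ENNReal.ofReal (|f (r • x) - f (r • (x - y))| * ‖y‖ ^ (-(finrank ℝ E : ℝ) - s)) =
        ENNReal.ofReal (r ^ (finrank ℝ E + s)) * F (r • x) (r • y) := by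
    intro x y
    rw [← ENNReal.ofReal_mul (by positivity), smul_sub, norm_smul, norm_of_nonneg hr.le,
      mul_rpow hr.le (norm_nonneg y), show -(finrank ℝ E : ℝ) - s = -(finrank ℝ E + s) by ring,
      rpow_neg hr.le]
    field_simp
  have hc :
      ENNReal.ofReal (r ^ (finrank ℝ E + s)) * c * c = ENNReal.ofReal (r ^ (s - finrank ℝ E)) := by
    rw [← ENNReal.ofReal_mul (by positivity), ← ENNReal.ofReal_mul (by positivity),
      ← rpow_natCast, ← rpow_neg hr.le, ← rpow_add hr, ← rpow_add hr]
    ring_nf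
  have hscale : ∀ x, ∫⁻ y, F x (r • y) ∂μ = c * ∫⁻ y, F x y ∂μ :=
    fun x ↦ lintegral_comp_smul_of_pos μ (F x) hr
  calc besovNorm μ s (fun x ↦ f (r • x))
      = ∫⁻ x, ENNReal.ofReal (r ^ (finrank ℝ E + s)) * ∫⁻ y, F (r • x) (r • y) ∂μ ∂μ := by
        simp_rw [besovNorm, hF, lintegral_const_mul' _ _ ENNReal.ofReal_ne_top]
    _ = ENNReal.ofReal (r ^ (finrank ℝ E + s)) * c * ∫⁻ x, ∫⁻ y, F (r • x) y ∂μ ∂μ := by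
        simp_rw [hscale, ← mul_assoc]
        exact lintegral_const_mul' _ _ (by finiteness)
    _ = ENNReal.ofReal (r ^ (s - finrank ℝ E)) * besovNorm μ s f := by
        rw [lintegral_comp_smul_of_pos μ (fun x ↦ ∫⁻ y, F x y ∂μ) hr, ← hc, besovNorm]
        ring

lemma integrable_min_one_mul_rpow [Nontrivial E] {s : ℝ} (hs0 : 0 < s) (hs1 : s < 1) :
    Integrable (fun y : E ↦ min 1 ‖y‖ * ‖y‖ ^ (-(finrank ℝ E : ℝ) - s)) μ := by
  rw [integrable_fun_norm_addHaar μ (f := fun r ↦ min 1 r * r ^ (-(finrank ℝ E : ℝ) - s)),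
    ← Ioc_union_Ioi_eq_Ioi zero_le_one]
  have hd : (finrank ℝ E : ℝ) - 1 = ((finrank ℝ E - 1 : ℕ) : ℝ) := by
    rw [Nat.cast_sub finrank_pos, Nat.cast_one]
  have hpow : ∀ r : ℝ, 0 < r → r ^ (finrank ℝ E - 1) * r ^ (-(finrank ℝ E : ℝ) - s)
      = r ^ (-1 - s) := by
    intro r hr
    rw [← rpow_natCast, ← hd, ← rpow_add hr]
    ring_nf
  refine IntegrableOn.union ?_ ?_
  · refine ((intervalIntegrable_iff_integrableOn_Ioc_of_le zero_le_one).1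
      (intervalIntegral.intervalIntegrable_rpow' (by linarith : -1 < -s))).congr_fun
      (fun r hr ↦ ?_) measurableSet_Ioc
    dsimp only
    rw [smul_eq_mul, min_eq_right hr.2, mul_left_comm, hpow r hr.1,
      show -s = 1 + (-1 - s) by ring, rpow_add hr.1, rpow_one]
  · refine (integrableOn_Ioi_rpow_of_lt (by linarith : -1 - s < -1) one_pos).congr_fun
      (fun r hr ↦ ?_) measurableSet_Ioi
    dsimp only
    rw [smul_eq_mul, min_eq_left (le_of_lt hr), one_mul, hpow r (zero_lt_one.trans hr)]

lemma besovNorm_eq_lintegral_l1Modulus (s : ℝ) {f : E → ℝ} (hf : Measurable f) :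
    besovNorm μ s f =
      ∫⁻ y, l1Modulus μ f y * ENNReal.ofReal (‖y‖ ^ (-(finrank ℝ E : ℝ) - s)) ∂μ := by
  simp_rw [besovNorm, ENNReal.ofReal_mul (abs_nonneg _)]
  rw [lintegral_lintegral_swap (by fun_prop)]
  congr with y
  exact lintegral_mul_const _ (by fun_prop)

lemma besovNorm_lt_top [Nontrivial E] {s : ℝ} (hs0 : 0 < s) (hs1 : s < 1) {f : E → ℝ}
    (hf : Measurable f) (hf_int : Integrable f μ) {G : E → ℝ} (hG_int : Integrable G μ)
    (hG : ∀ x y, ‖y‖ ≤ 1 → |f x - f (x - y)| ≤ ‖y‖ * G x) :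
    besovNorm μ s f < ∞ := by
  set C := 2 * ∫⁻ x, ENNReal.ofReal |f x| ∂μ + ∫⁻ x, ENNReal.ofReal (G x) ∂μ
  have hC : C < ∞ := ENNReal.add_lt_top.2
    ⟨ENNReal.mul_lt_top (by simp) hf_int.abs.lintegral_lt_top, hG_int.lintegral_lt_top⟩
  have hmod : ∀ y, l1Modulus μ f y ≤ C * ENNReal.ofReal (min 1 ‖y‖) := by
    intro y
    rcases le_or_gt ‖y‖ 1 with hy | hy
    · rw [min_eq_right hy, mul_comm]
      exact (l1Modulus_le_of_abs_sub_le (hG · y hy)).trans (by gcongr; exact le_add_self)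
    · rw [min_eq_left hy.le, ENNReal.ofReal_one, mul_one]
      exact (l1Modulus_le_two_mul hf y).trans le_self_add
  rw [besovNorm_eq_lintegral_l1Modulus μ s hf]
  calc ∫⁻ y, l1Modulus μ f y * ENNReal.ofReal (‖y‖ ^ (-(finrank ℝ E : ℝ) - s)) ∂μ
      ≤ ∫⁻ y, C * ENNReal.ofReal (min 1 ‖y‖ * ‖y‖ ^ (-(finrank ℝ E : ℝ) - s)) ∂μ := by
        refine lintegral_mono fun y ↦ ?_
        rw [ENNReal.ofReal_mul (by positivity), ← mul_assoc]
        gcongr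
        exact hmod y
    _ = C * ∫⁻ y, ENNReal.ofReal (min 1 ‖y‖ * ‖y‖ ^ (-(finrank ℝ E : ℝ) - s)) ∂μ :=
        lintegral_const_mul' _ _ hC.ne
    _ < ∞ := ENNReal.mul_lt_top hC (integrable_min_one_mul_rpow μ hs0 hs1).lintegral_lt_top

end AddHaar

lemma abs_exp_neg_sub_exp_neg_le (a b : ℝ) : |exp (-a) - exp (-b)| ≤ |a - b| * exp (-min a b) := by
  wlog hab : a ≤ b generalizing a b
  · rw [abs_sub_comm, abs_sub_comm a, min_comm]
    exact this b a (le_of_not_ge hab)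
  have hexp : exp (-b) = exp (-a) * exp (-(b - a)) := by rw [← exp_add]; ring_nf
  rw [min_eq_left hab, abs_sub_comm a b, abs_of_nonneg (sub_nonneg.2 hab), hexp,
    abs_of_nonneg (sub_nonneg.2 (mul_le_of_le_one_right (exp_nonneg _)
      (exp_le_one_iff.2 (by linarith))))]
  nlinarith [add_one_le_exp (-(b - a)), exp_pos (-a)]

lemma abs_exp_neg_sq_norm_sub_le {F : Type*} [SeminormedAddCommGroup F] (x y : F)
    (hy : ‖y‖ ≤ 1) :
    |exp (-‖x‖ ^ 2 / 4) - exp (-‖x - y‖ ^ 2 / 4)| ≤ ‖y‖ * (exp (9 / 2) * exp (-‖x‖ ^ 2 / 8)) := by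
  have hrd : |‖x‖ - ‖x - y‖| ≤ ‖y‖ := by simpa using abs_norm_sub_norm_le x (x - y)
  set r := ‖x‖
  set d := ‖x - y‖
  have hr : 0 ≤ r := norm_nonneg x
  have hd : 0 ≤ d := norm_nonneg (x - y)
  have hdiff : |r ^ 2 / 4 - d ^ 2 / 4| ≤ ‖y‖ * ((2 * r + 1) / 4) := by
    rw [show r ^ 2 / 4 - d ^ 2 / 4 = (r - d) * ((r + d) / 4) by ring, abs_mul,
      abs_of_nonneg (show 0 ≤ (r + d) / 4 by positivity)]
    have := abs_le.1 hrd
    exact mul_le_mul hrd (by linarith) (by positivity) (norm_nonneg y)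
  have hmin : (r ^ 2 - 2 * r) / 4 ≤ min (r ^ 2 / 4) (d ^ 2 / 4) := by
    have := abs_le.1 hrd
    refine le_min (by linarith) ?_
    rcases le_total r 1 with h | h <;> nlinarith
  calc |exp (-r ^ 2 / 4) - exp (-d ^ 2 / 4)|
      = |exp (-(r ^ 2 / 4)) - exp (-(d ^ 2 / 4))| := by simp only [neg_div]
    _ ≤ |r ^ 2 / 4 - d ^ 2 / 4| * exp (-min (r ^ 2 / 4) (d ^ 2 / 4)) :=
        abs_exp_neg_sub_exp_neg_le _ _
    _ ≤ ‖y‖ * ((2 * r + 1) / 4) * exp (-((r ^ 2 - 2 * r) / 4)) := by gcongr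
    _ ≤ ‖y‖ * (exp r * exp (-((r ^ 2 - 2 * r) / 4))) := by
        rw [mul_assoc]
        gcongr
        linarith [add_one_le_exp r]
    _ ≤ ‖y‖ * (exp (9 / 2) * exp (-r ^ 2 / 8)) := by
        rw [← exp_add, ← exp_add]
        gcongr ‖y‖ * ?_
        -- `9 / 2` is the maximum of `3r/2 - r²/8`, attained at `r = 6`
        exact exp_le_exp.2 (by nlinarith [sq_nonneg (r - 6)])

section HeatKernel

variable {V : Type*} [NormedAddCommGroup V] [InnerProductSpace ℝ V]

noncomputable def heatKernel (t : ℝ) (x : V) : ℝ :=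
  (4 * π * t) ^ (-(finrank ℝ V : ℝ) / 2) * exp (-‖x‖ ^ 2 / (4 * t))

lemma heatKernel_eq_rpow_mul_heatKernel_one {t : ℝ} (ht : 0 < t) (x : V) :
    heatKernel t x = t ^ (-(finrank ℝ V : ℝ) / 2) * heatKernel 1 ((√t)⁻¹ • x) := by
  rw [heatKernel, heatKernel, mul_one, mul_rpow (by positivity) ht.le, norm_smul, norm_inv,
    norm_of_nonneg (sqrt_nonneg t), mul_pow, inv_pow, sq_sqrt ht.le]
  field_simp

lemma abs_heatKernel_one_sub_le (x y : V) (hy : ‖y‖ ≤ 1) :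
    |heatKernel 1 x - heatKernel 1 (x - y)| ≤
      ‖y‖ * ((4 * π) ^ (-(finrank ℝ V : ℝ) / 2) * (exp (9 / 2) * exp (-‖x‖ ^ 2 / 8))) := by
  have hc : 0 < (4 * π) ^ (-(finrank ℝ V : ℝ) / 2) := by positivity
  simp only [heatKernel, mul_one, ← mul_sub, abs_mul, abs_of_pos hc]
  rw [mul_left_comm]
  gcongr
  exact abs_exp_neg_sq_norm_sub_le x y hy

variable [MeasurableSpace V] [BorelSpace V]

lemma measurable_heatKernel (t : ℝ) : Measurable (heatKernel t : V → ℝ) := by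
  unfold heatKernel
  fun_prop

variable [FiniteDimensional ℝ V]

lemma integrable_exp_neg_mul_sq_norm {b : ℝ} (hb : 0 < b) :
    Integrable (fun x : V ↦ exp (-b * ‖x‖ ^ 2)) := by
  refine (GaussianFourier.integrable_cexp_neg_mul_sq_norm_add (V := V) (b := b)
    (by simpa using hb) 0 0).norm.congr (.of_forall fun x ↦ ?_)
  simp [Complex.norm_exp, ← Complex.ofReal_pow]

lemma integrable_heatKernel_one : Integrable (heatKernel 1 : V → ℝ) := by
  refine ((integrable_exp_neg_mul_sq_norm (V := V) (b := 1 / 4) (by norm_num)).const_mul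
    ((4 * π) ^ (-(finrank ℝ V : ℝ) / 2))).congr (.of_forall fun x ↦ ?_)
  simp only [heatKernel]
  ring_nf

lemma besovNorm_heatKernel (s : ℝ) {t : ℝ} (ht : 0 < t) :
    besovNorm volume s (heatKernel t : V → ℝ) =
      ENNReal.ofReal (t ^ (-s / 2)) * besovNorm volume s (heatKernel 1 : V → ℝ) := by
  have hscale : (heatKernel t : V → ℝ) =
      fun x ↦ t ^ (-(finrank ℝ V : ℝ) / 2) * heatKernel 1 ((√t)⁻¹ • x) :=
    funext (heatKernel_eq_rpow_mul_heatKernel_one ht)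
  rw [hscale, besovNorm_const_mul s (by positivity),
    besovNorm_comp_smul volume s _ (by positivity), ← mul_assoc,
    ← ENNReal.ofReal_mul (by positivity)]
  congr 2
  rw [sqrt_eq_rpow, ← rpow_neg ht.le, ← rpow_mul ht.le, ← rpow_add ht]
  ring_nf

lemma besovNorm_heatKernel_one_lt_top [Nontrivial V] {s : ℝ} (hs0 : 0 < s) (hs1 : s < 1) :
    besovNorm volume s (heatKernel 1 : V → ℝ) < ∞ := by
  refine besovNorm_lt_top volume hs0 hs1 (measurable_heatKernel 1) integrable_heatKernel_one
    (((integrable_exp_neg_mul_sq_norm (V := V) (b := 1 / 8) (by norm_num)).const_mul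
      ((4 * π) ^ (-(finrank ℝ V : ℝ) / 2) * exp (9 / 2))).congr (.of_forall fun x ↦ ?_))
    abs_heatKernel_one_sub_le
  ring_nf

lemma exists_besovNorm_heatKernel_le [Nontrivial V] {s : ℝ} (hs0 : 0 < s) (hs1 : s < 1) :
    ∃ C : ℝ, 0 < C ∧ ∀ t : ℝ, 0 < t →
      besovNorm volume s (heatKernel t : V → ℝ) ≤ ENNReal.ofReal (C * t ^ (-s / 2)) := by
  set B := besovNorm volume s (heatKernel 1 : V → ℝ)
  have hB : B ≤ ENNReal.ofReal (B.toReal + 1) :=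
    (ENNReal.ofReal_toReal (besovNorm_heatKernel_one_lt_top hs0 hs1).ne).symm.le.trans
      (ENNReal.ofReal_le_ofReal (le_add_of_nonneg_right zero_le_one))
  refine ⟨B.toReal + 1, by positivity, fun t ht ↦ ?_⟩
  rw [besovNorm_heatKernel s ht, mul_comm, ENNReal.ofReal_mul (by positivity)]
  gcongr

end HeatKernel

/-- Homogeneous Besov bound `‖h_t‖_{Ḃ^{s,1}_1} ≤ C t^{-s/2}` for the heat kernel on `ℝⁿ`. -/
theorem heat_kernel_besov_bound
    (n : ℕ) (hn : 1 ≤ n) (s : ℝ) (hs0 : 0 < s) (hs1 : s < 1) :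
    ∃ C : ℝ, 0 < C ∧ ∀ t : ℝ, 0 < t →
      (∫⁻ x : EuclideanSpace ℝ (Fin n), ∫⁻ y : EuclideanSpace ℝ (Fin n),
          ENNReal.ofReal
            (|(4 * Real.pi * t) ^ (-(n : ℝ) / 2) * Real.exp (-‖x‖ ^ 2 / (4 * t))
                - (4 * Real.pi * t) ^ (-(n : ℝ) / 2) * Real.exp (-‖x - y‖ ^ 2 / (4 * t))|
              * ‖y‖ ^ (-(n : ℝ) - s)))
        ≤ ENNReal.ofReal (C * t ^ (-s / 2)) := by
  have : Nonempty (Fin n) := ⟨⟨0, hn⟩⟩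
  simpa only [besovNorm, heatKernel, finrank_euclideanSpace_fin] using
    exists_besovNorm_heatKernel_le (V := EuclideanSpace ℝ (Fin n)) hs0 hs1
end

section
/- Let n ≥ 1, let 0 < β < 1/2, 0 < δ < 1/2 and c > 0, and let π : ℝⁿ → ℝ be measurable with 0 ≤ π(y) ≤ c(‖y‖^{-n-2β} + ‖y‖^{-n-2δ}) for all y ≠ 0. Let R > 0, M > 0, and let φ : ℝⁿ → ℝ be a function with |φ(x)| ≤ M for all x and |φ(x) − φ(y)| ≤ (M/R)‖x − y‖ for all x, y. Then there exists a constant C > 0, depending only on n, β, δ and c, such that for every integrable A : ℝⁿ → ℝ, ∫_{ℝⁿ} ∫_{ℝⁿ} |φ(x) − φ(x−y)| |A(x−y)| π(y) dy dx ≤ C M (R^{-2β} + R^{-2δ}) ‖A‖_{L¹}. -/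
/-!
A bounded, `M / R`-Lipschitz `φ` satisfies `|φ x - φ (x - y)| ≤ 2 M min (1, ‖y‖ / R)`. By Tonelli
and translation invariance, the double integral is then at most `‖A‖₁` times
`2 M ∫ min (1, ‖y‖ / R) π y dy`. In polar coordinates, and for `0 < a < 1`,
`∫ min (1, ‖y‖ / R) ‖y‖ ^ (-n - a) dy = |S^{n-1}| R ^ (-a) / (a (1 - a))`: the factor `‖y‖ / R`
tames the singularity of `π` at the origin, and the decay of `π` makes the tail integrable.
-/

open MeasureTheory Set Metric
open scoped ENNReal

lemma abs_sub_le_two_mul_min {E : Type*} [SeminormedAddCommGroup E] {φ : E → ℝ} {M R : ℝ}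
    (hbound : ∀ x, |φ x| ≤ M) (hlip : ∀ x y, |φ x - φ y| ≤ M / R * ‖x - y‖) (x y : E) :
    |φ x - φ y| ≤ 2 * M * min 1 (‖x - y‖ / R) := by
  rcases le_total (‖x - y‖ / R) 1 with h | h
  · have hlip' : |φ x - φ y| ≤ M * (‖x - y‖ / R) := by
      simpa only [mul_div_assoc', div_mul_eq_mul_div] using hlip x y
    rw [min_eq_right h]
    nlinarith [abs_nonneg (φ x - φ y)]
  · rw [min_eq_left h]
    linarith [abs_sub (φ x) (φ y), hbound x, hbound y]

section Convolution

variable {G : Type*} [MeasurableSpace G] [AddGroup G] [MeasurableAdd₂ G] [MeasurableNeg G]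
  {μ : Measure G} [SFinite μ] [μ.IsAddRightInvariant]

lemma lintegral_lintegral_mul_comp_sub {g f : G → ℝ≥0∞} (hg : AEMeasurable g μ)
    (hf : AEMeasurable f μ) :
    ∫⁻ x, ∫⁻ y, g y * f (x - y) ∂μ ∂μ = (∫⁻ y, g y ∂μ) * ∫⁻ x, f x ∂μ := by
  have hprod : AEMeasurable (fun p : G × G => g p.2 * f (p.1 - p.2)) (μ.prod μ) :=
    (hg.comp_snd).mul
      (hf.comp_quasiMeasurePreserving (quasiMeasurePreserving_sub_of_right_invariant μ μ))
  rw [lintegral_lintegral_swap hprod]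
  have hinner (y : G) : ∫⁻ x, g y * f (x - y) ∂μ = g y * ∫⁻ x, f x ∂μ := by
    rw [lintegral_sub_right_eq_self (fun x => g y * f x) y, lintegral_const_mul'' _ hf]
  simp_rw [hinner]
  exact lintegral_mul_const'' _ hg

end Convolution

lemma lintegral_Ioc_rpow {p R : ℝ} (hp : -1 < p) (hR : 0 ≤ R) :
    ∫⁻ r in Ioc 0 R, ENNReal.ofReal (r ^ p) = ENNReal.ofReal (R ^ (p + 1) / (p + 1)) := by
  have hp' : p + 1 ≠ 0 := by linarith
  rw [← ofReal_integral_eq_lintegral_ofReal (intervalIntegral.intervalIntegrable_rpow' hp).1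
      ((ae_restrict_mem measurableSet_Ioc).mono fun r hr => Real.rpow_nonneg hr.1.le p),
    ← intervalIntegral.integral_of_le hR, integral_rpow (Or.inl hp), Real.zero_rpow hp', sub_zero]

lemma lintegral_Ioi_rpow {p R : ℝ} (hp : p < -1) (hR : 0 < R) :
    ∫⁻ r in Ioi R, ENNReal.ofReal (r ^ p) = ENNReal.ofReal (R ^ (p + 1) / (-p - 1)) := by
  rw [← ofReal_integral_eq_lintegral_ofReal (integrableOn_Ioi_rpow_of_lt hp hR)
      ((ae_restrict_mem measurableSet_Ioi).mono fun r hr => Real.rpow_nonneg (hR.trans hr).le p),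
    integral_Ioi_rpow_of_lt hp hR, neg_div, ← div_neg, neg_add']

lemma lintegral_Ioi_min_one_mul_rpow {a R : ℝ} (ha0 : 0 < a) (ha1 : a < 1) (hR : 0 < R) :
    ∫⁻ r in Ioi 0, ENNReal.ofReal (min 1 (r / R) * r ^ (-1 - a)) =
      ENNReal.ofReal (R ^ (-a) / (a * (1 - a))) := by
  have near : EqOn (fun r => ENNReal.ofReal (min 1 (r / R) * r ^ (-1 - a)))
      (fun r => ENNReal.ofReal R⁻¹ * ENNReal.ofReal (r ^ (-a))) (Ioc 0 R) := by
    intro r ⟨hr0, hrR⟩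
    dsimp only
    rw [min_eq_right ((div_le_one hR).2 hrR), ← ENNReal.ofReal_mul (inv_nonneg.2 hR.le),
      div_eq_inv_mul, mul_assoc, ← Real.rpow_one_add' hr0.le (by linarith)]
    ring_nf
  have far : EqOn (fun r => ENNReal.ofReal (min 1 (r / R) * r ^ (-1 - a)))
      (fun r => ENNReal.ofReal (r ^ (-1 - a))) (Ioi R) := by
    intro r hr
    dsimp only
    rw [min_eq_left ((one_le_div hR).2 (le_of_lt hr)), one_mul]
  rw [← Ioc_union_Ioi_eq_Ioi hR.le, lintegral_union measurableSet_Ioi Ioc_disjoint_Ioi_same,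
    setLIntegral_congr_fun measurableSet_Ioc near, setLIntegral_congr_fun measurableSet_Ioi far,
    lintegral_const_mul' _ _ ENNReal.ofReal_ne_top, lintegral_Ioc_rpow (by linarith) hR.le,
    lintegral_Ioi_rpow (by linarith) hR, ← ENNReal.ofReal_mul (inv_nonneg.2 hR.le),
    ← ENNReal.ofReal_add
      (mul_nonneg (inv_nonneg.2 hR.le) (div_nonneg (by positivity) (by linarith)))
      (div_nonneg (by positivity) (by linarith))]
  congr 1
  have h1a : 1 - a ≠ 0 := by linarith
  rw [Real.rpow_add hR, Real.rpow_one, show -a + 1 = 1 - a by ring, show -1 - a + 1 = -a by ring,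
    show -(-1 - a) - 1 = a by ring]
  field_simp
  ring

section Polar

variable {E : Type*} [NormedAddCommGroup E] [NormedSpace ℝ E] [FiniteDimensional ℝ E]
  [MeasurableSpace E] [BorelSpace E] [Nontrivial E] (μ : Measure E) [μ.IsAddHaarMeasure]

lemma lintegral_fun_norm_addHaar {f : ℝ → ℝ≥0∞} (hf : Measurable f) :
    ∫⁻ x, f ‖x‖ ∂μ = μ.toSphere univ *
      ∫⁻ r in Ioi (0 : ℝ), ENNReal.ofReal (r ^ (Module.finrank ℝ E - 1)) * f r := by
  have hf' : Measurable fun p : sphere (0 : E) 1 × Ioi (0 : ℝ) => f p.2 := by fun_prop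
  calc ∫⁻ x, f ‖x‖ ∂μ
      = ∫⁻ x : ({0}ᶜ : Set E), f ‖(x : E)‖ ∂(μ.comap Subtype.val) := by
        rw [lintegral_subtype_comap (measurableSet_singleton 0).compl (fun x => f ‖x‖),
          restrict_compl_singleton]
    _ = ∫⁻ p, f p.2 ∂(μ.toSphere.prod (Measure.volumeIoiPow (Module.finrank ℝ E - 1))) := by
        rw [← (μ.measurePreserving_homeomorphUnitSphereProd).lintegral_comp hf']
        simp [homeomorphUnitSphereProd]
    _ = μ.toSphere univ * ∫⁻ r, f r ∂(Measure.volumeIoiPow (Module.finrank ℝ E - 1)) := by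
        rw [lintegral_prod _ hf'.aemeasurable]
        dsimp only
        rw [lintegral_const, mul_comm]
    _ = _ := by
        rw [Measure.volumeIoiPow]
        exact congrArg _ ((lintegral_withDensity_eq_lintegral_mul _ (by fun_prop)
          (hf.comp measurable_subtype_coe)).trans (lintegral_subtype_comap measurableSet_Ioi
            fun r => ENNReal.ofReal (r ^ (Module.finrank ℝ E - 1)) * f r))

lemma lintegral_min_one_mul_norm_rpow {a R : ℝ} (ha0 : 0 < a) (ha1 : a < 1) (hR : 0 < R) :
    ∫⁻ y, ENNReal.ofReal (min 1 (‖y‖ / R) * ‖y‖ ^ (-(Module.finrank ℝ E : ℝ) - a)) ∂μ =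
      ENNReal.ofReal (μ.toSphere.real univ * (R ^ (-a) / (a * (1 - a)))) := by
  have hd : 1 ≤ Module.finrank ℝ E := Module.finrank_pos
  have radial : EqOn
      (fun r => ENNReal.ofReal (r ^ (Module.finrank ℝ E - 1)) *
        ENNReal.ofReal (min 1 (r / R) * r ^ (-(Module.finrank ℝ E : ℝ) - a)))
      (fun r => ENNReal.ofReal (min 1 (r / R) * r ^ (-1 - a))) (Ioi 0) := by
    intro r (hr : 0 < r)
    dsimp only
    rw [← ENNReal.ofReal_mul (by positivity), mul_left_comm, ← Real.rpow_natCast,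
      ← Real.rpow_add hr, Nat.cast_sub hd]
    ring_nf
  rw [lintegral_fun_norm_addHaar μ (f := fun r => ENNReal.ofReal
      (min 1 (r / R) * r ^ (-(Module.finrank ℝ E : ℝ) - a))) (by fun_prop),
    setLIntegral_congr_fun measurableSet_Ioi radial, lintegral_Ioi_min_one_mul_rpow ha0 ha1 hR,
    ENNReal.ofReal_mul measureReal_nonneg, ofReal_measureReal]

lemma lintegral_min_one_mul_le_of_le_rpow_add_rpow {π : E → ℝ} {a b c R : ℝ} (hc : 0 ≤ c)
    (ha0 : 0 < a) (ha1 : a < 1) (hb0 : 0 < b) (hb1 : b < 1) (hR : 0 < R)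
    (hπ : ∀ y, y ≠ 0 → π y ≤ c * (‖y‖ ^ (-(Module.finrank ℝ E : ℝ) - a) +
      ‖y‖ ^ (-(Module.finrank ℝ E : ℝ) - b))) :
    ∫⁻ y, ENNReal.ofReal (min 1 (‖y‖ / R) * π y) ∂μ ≤
      ENNReal.ofReal (c * μ.toSphere.real univ *
        (R ^ (-a) / (a * (1 - a)) + R ^ (-b) / (b * (1 - b)))) := by
  set d : ℝ := (Module.finrank ℝ E : ℝ)
  have hmin (y : E) : 0 ≤ min 1 (‖y‖ / R) := le_min zero_le_one (by positivity)
  have hpoint (y : E) : ENNReal.ofReal (min 1 (‖y‖ / R) * π y) ≤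
      ENNReal.ofReal c * (ENNReal.ofReal (min 1 (‖y‖ / R) * ‖y‖ ^ (-d - a)) +
        ENNReal.ofReal (min 1 (‖y‖ / R) * ‖y‖ ^ (-d - b))) := by
    rw [← ENNReal.ofReal_add (mul_nonneg (hmin y) (by positivity))
        (mul_nonneg (hmin y) (by positivity)),
      ← ENNReal.ofReal_mul hc]
    refine ENNReal.ofReal_le_ofReal ?_
    rcases eq_or_ne y 0 with rfl | hy
    · simp
    · calc min 1 (‖y‖ / R) * π y ≤ min 1 (‖y‖ / R) * (c * (‖y‖ ^ (-d - a) + ‖y‖ ^ (-d - b))) :=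
            mul_le_mul_of_nonneg_left (hπ y hy) (hmin y)
        _ = _ := by ring
  have ha1' : 0 < 1 - a := by linarith
  have hb1' : 0 < 1 - b := by linarith
  calc ∫⁻ y, ENNReal.ofReal (min 1 (‖y‖ / R) * π y) ∂μ
      ≤ ∫⁻ y, ENNReal.ofReal c * (ENNReal.ofReal (min 1 (‖y‖ / R) * ‖y‖ ^ (-d - a)) +
          ENNReal.ofReal (min 1 (‖y‖ / R) * ‖y‖ ^ (-d - b))) ∂μ := lintegral_mono hpoint
    _ = _ := by
      rw [lintegral_const_mul' _ _ ENNReal.ofReal_ne_top, lintegral_add_left (by fun_prop),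
        lintegral_min_one_mul_norm_rpow μ ha0 ha1 hR, lintegral_min_one_mul_norm_rpow μ hb0 hb1 hR,
        ← ENNReal.ofReal_add (by positivity) (by positivity), ← ENNReal.ofReal_mul hc]
      ring_nf

end Polar

lemma lintegral_lintegral_commutator_le {G : Type*} [NormedAddCommGroup G] [MeasurableSpace G]
    [BorelSpace G] [SecondCountableTopology G] {μ : Measure G} [SFinite μ] [μ.IsAddRightInvariant]
    {φ π A : G → ℝ} {M R : ℝ} (hφ : ∀ x, |φ x| ≤ M) (hφlip : ∀ x y, |φ x - φ y| ≤ M / R * ‖x - y‖)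
    (hR : 0 ≤ R) (hπmeas : Measurable π) (hπ0 : ∀ y, 0 ≤ π y)
    (hA : Integrable A μ) :
    ∫⁻ x, ∫⁻ y, ENNReal.ofReal (|φ x - φ (x - y)| * |A (x - y)| * π y) ∂μ ∂μ ≤
      ENNReal.ofReal (2 * M) * (∫⁻ y, ENNReal.ofReal (min 1 (‖y‖ / R) * π y) ∂μ) *
        ENNReal.ofReal (∫ x, |A x| ∂μ) := by
  have hM : 0 ≤ M := (abs_nonneg _).trans (hφ 0)
  have hpoint (x y : G) : ENNReal.ofReal (|φ x - φ (x - y)| * |A (x - y)| * π y) ≤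
      ENNReal.ofReal (2 * M) * ENNReal.ofReal (min 1 (‖y‖ / R) * π y) *
        ENNReal.ofReal |A (x - y)| := by
    have hφxy := abs_sub_le_two_mul_min hφ hφlip x (x - y)
    rw [sub_sub_cancel] at hφxy
    have hπA : 0 ≤ π y * |A (x - y)| := mul_nonneg (hπ0 y) (abs_nonneg _)
    have hk : 0 ≤ min 1 (‖y‖ / R) * π y := mul_nonneg (by positivity) (hπ0 y)
    rw [← ENNReal.ofReal_mul (by positivity), ← ENNReal.ofReal_mul (by positivity)]
    refine ENNReal.ofReal_le_ofReal ?_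
    calc |φ x - φ (x - y)| * |A (x - y)| * π y = |φ x - φ (x - y)| * (π y * |A (x - y)|) := by
          ring
      _ ≤ 2 * M * min 1 (‖y‖ / R) * (π y * |A (x - y)|) := by gcongr
      _ = _ := by ring
  calc ∫⁻ x, ∫⁻ y, ENNReal.ofReal (|φ x - φ (x - y)| * |A (x - y)| * π y) ∂μ ∂μ
      ≤ ∫⁻ x, ∫⁻ y, ENNReal.ofReal (2 * M) * ENNReal.ofReal (min 1 (‖y‖ / R) * π y) *
          ENNReal.ofReal |A (x - y)| ∂μ ∂μ :=
        lintegral_mono fun x => lintegral_mono fun y => hpoint x y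
    _ = _ := by
      rw [lintegral_lintegral_mul_comp_sub (by fun_prop) hA.abs.aemeasurable.ennreal_ofReal,
        lintegral_const_mul' _ _ ENNReal.ofReal_ne_top,
        ofReal_integral_eq_lintegral_ofReal hA.abs (.of_forall fun x => abs_nonneg _)]

/-- `L¹` bound for the commutator `[𝓛, φ]A` between a Lévy operator with kernel `π` and
multiplication by a rescaled cutoff `φ`. -/
theorem commutator_L1_bound
    (n : ℕ) (hn : 1 ≤ n) (β δ c : ℝ)
    (hβ0 : 0 < β) (hβ : β < 1 / 2) (hδ0 : 0 < δ) (hδ : δ < 1 / 2) (hc : 0 < c)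
    (π : EuclideanSpace ℝ (Fin n) → ℝ) (hπmeas : Measurable π) (hπ0 : ∀ y, 0 ≤ π y)
    (hπub : ∀ y : EuclideanSpace ℝ (Fin n), y ≠ 0 →
      π y ≤ c * (‖y‖ ^ (-(n : ℝ) - 2 * β) + ‖y‖ ^ (-(n : ℝ) - 2 * δ))) :
    ∃ C : ℝ, 0 < C ∧ ∀ (R M : ℝ), 0 < R → 0 < M →
      ∀ φ : EuclideanSpace ℝ (Fin n) → ℝ,
        (∀ x, |φ x| ≤ M) → (∀ x y, |φ x - φ y| ≤ M / R * ‖x - y‖) →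
        ∀ A : EuclideanSpace ℝ (Fin n) → ℝ, Integrable A volume →
          (∫⁻ x, ∫⁻ y, ENNReal.ofReal (|φ x - φ (x - y)| * |A (x - y)| * π y))
            ≤ ENNReal.ofReal
                (C * M * (R ^ (-(2 * β)) + R ^ (-(2 * δ))) * ∫ x, |A x|) := by
  have : NeZero n := ⟨by omega⟩
  have hσ : 0 < (volume : Measure (EuclideanSpace ℝ (Fin n))).toSphere.real univ :=
    ENNReal.toReal_pos (Measure.measure_univ_ne_zero.2 (Measure.toSphere_ne_zero _))
      (measure_ne_top _ _)
  set σ := (volume : Measure (EuclideanSpace ℝ (Fin n))).toSphere.real univ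
  have hu : 0 < 2 * β * (1 - 2 * β) := mul_pos (by linarith) (by linarith)
  have hv : 0 < 2 * δ * (1 - 2 * δ) := mul_pos (by linarith) (by linarith)
  set u := 2 * β * (1 - 2 * β)
  set v := 2 * δ * (1 - 2 * δ)
  refine ⟨2 * c * σ * (1 / u + 1 / v), by positivity, fun R M hR _ φ hφ hφlip A hA => ?_⟩
  have hkernel := lintegral_min_one_mul_le_of_le_rpow_add_rpow (a := 2 * β) (b := 2 * δ) volume
    hc.le (by linarith) (by linarith) (by linarith) (by linarith) hR
    (by rwa [finrank_euclideanSpace_fin])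
  set X := R ^ (-(2 * β))
  set Y := R ^ (-(2 * δ))
  have hsum : X / u + Y / v ≤ (1 / u + 1 / v) * (X + Y) := by
    have : 0 ≤ X / v + Y / u := by positivity
    linarith [show (1 / u + 1 / v) * (X + Y) = X / u + Y / v + (X / v + Y / u) by ring]
  have hA1 : 0 ≤ ∫ x, |A x| := integral_nonneg fun x => abs_nonneg _
  calc _ ≤ ENNReal.ofReal (2 * M) * (∫⁻ y, ENNReal.ofReal (min 1 (‖y‖ / R) * π y)) *
          ENNReal.ofReal (∫ x, |A x|) :=
        lintegral_lintegral_commutator_le hφ hφlip hR.le hπmeas hπ0 hA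
    _ ≤ ENNReal.ofReal (2 * M) * ENNReal.ofReal (c * σ * (X / u + Y / v)) *
          ENNReal.ofReal (∫ x, |A x|) := by gcongr
    _ = ENNReal.ofReal (2 * M * (c * σ * (X / u + Y / v)) * ∫ x, |A x|) := by
      rw [← ENNReal.ofReal_mul (by positivity), ← ENNReal.ofReal_mul (by positivity)]
    _ ≤ ENNReal.ofReal (2 * M * (c * σ * ((1 / u + 1 / v) * (X + Y))) * ∫ x, |A x|) := by
      gcongr
    _ = _ := by congr 1; ring
end

section
/- Let n ≥ 1, let 0 < β ≤ 1/2, 0 < δ ≤ 1/2 and c > 0, and let π : ℝⁿ → ℝ be measurable with 0 ≤ π(y) ≤ c(‖y‖^{-n-2β} + ‖y‖^{-n-2δ}) for all y ≠ 0. Let φ : ℝⁿ → ℝ be a bounded C² function with bounded second derivatives, let R > 0, and set φ_R(x) = φ(x/R). Then there exists a constant C > 0, depending only on n, β, δ, c, ‖φ‖_{L^∞} and the supremum of the operator norm of the Hessian D²φ, such that for every x ∈ ℝⁿ, (1/2) ∫_{ℝⁿ} |2φ_R(x) − φ_R(x+y) − φ_R(x−y)| π(y) dy ≤ C (R^{-2β}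 + R^{-2δ}). -/
open MeasureTheory Set Metric Module
open scoped ENNReal

/-!
The second difference `2 φ(u) - φ(u + v) - φ(u - v)` is bounded both by `4 ‖φ‖_∞` and, by
first-order Taylor expansion in the directions `±v`, by `2 ‖D²φ‖_∞ ‖v‖²`. With `v = y / R`, the
integrand is therefore dominated by `m(y / R) · c (‖y‖^{-n-2β} + ‖y‖^{-n-2δ})`, where
`m(v) = min (4 ‖φ‖_∞, 2 ‖D²φ‖_∞ ‖v‖²)`.
The substitution `y = R z` turns the integral of each of the two terms into `R^{-2s}` times an
integral independent of `R`, which is finite for `0 < s < 1`: in polar coordinates its radial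
integrand behaves like `r^{1-2s}` near `0` and like `r^{-1-2s}` at infinity.
-/

section SecondDifference

variable {E : Type*} [NormedAddCommGroup E] [NormedSpace ℝ E] {φ : E → ℝ} {M₂ : ℝ}

lemma norm_fderiv_sub_fderiv_le (hφ : ContDiff ℝ 2 φ)
    (hM₂ : ∀ x, ‖iteratedFDeriv ℝ 2 φ x‖ ≤ M₂) (a b : E) :
    ‖fderiv ℝ φ a - fderiv ℝ φ b‖ ≤ M₂ * ‖a - b‖ := by
  have hdiff : Differentiable ℝ (fderiv ℝ φ) :=
    (hφ.fderiv_right (m := 1) le_rfl).differentiable one_ne_zero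
  refine convex_univ.norm_image_sub_le_of_norm_fderiv_le (fun z _ => hdiff z)
    (fun z _ => ?_) (mem_univ b) (mem_univ a)
  rw [← norm_iteratedFDeriv_one, norm_iteratedFDeriv_fderiv]
  exact hM₂ z

lemma norm_sub_sub_fderiv_le (hφ : ContDiff ℝ 2 φ)
    (hM₂ : ∀ x, ‖iteratedFDeriv ℝ 2 φ x‖ ≤ M₂) (u w : E) :
    ‖φ (u + w) - φ u - fderiv ℝ φ u w‖ ≤ M₂ * ‖w‖ ^ 2 := by
  have hM₂0 : 0 ≤ M₂ := (norm_nonneg _).trans (hM₂ u)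
  have h := (convex_closedBall u ‖w‖).norm_image_sub_le_of_norm_fderiv_le'
    (fun z _ => (hφ.differentiable two_ne_zero) z)
    (fun z hz => (norm_fderiv_sub_fderiv_le hφ hM₂ z u).trans
      (mul_le_mul_of_nonneg_left (mem_closedBall_iff_norm.mp hz) hM₂0))
    (mem_closedBall_self (norm_nonneg w)) (y := u + w) (by simp)
  simpa [sq, mul_assoc] using h

lemma abs_two_mul_sub_sub_le (hφ : ContDiff ℝ 2 φ)
    (hM₂ : ∀ x, ‖iteratedFDeriv ℝ 2 φ x‖ ≤ M₂) (u v : E) :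
    |2 * φ u - φ (u + v) - φ (u - v)| ≤ 2 * M₂ * ‖v‖ ^ 2 := by
  have hv := norm_sub_sub_fderiv_le hφ hM₂ u v
  have hnegv := norm_sub_sub_fderiv_le hφ hM₂ u (-v)
  rw [map_neg, norm_neg, ← sub_eq_add_neg, sub_neg_eq_add] at hnegv
  rw [Real.norm_eq_abs] at hv hnegv
  calc |2 * φ u - φ (u + v) - φ (u - v)|
      = |(φ (u + v) - φ u - fderiv ℝ φ u v) + (φ (u - v) - φ u + fderiv ℝ φ u v)| := by
        rw [← abs_neg]; ring_nf
    _ ≤ |φ (u + v) - φ u - fderiv ℝ φ u v| + |φ (u - v) - φ u + fderiv ℝ φ u v| :=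
        abs_add_le _ _
    _ ≤ 2 * M₂ * ‖v‖ ^ 2 := by linarith

lemma abs_two_mul_sub_sub_le_min (hφ : ContDiff ℝ 2 φ) {M₀ : ℝ} (hM₀ : ∀ x, |φ x| ≤ M₀)
    (hM₂ : ∀ x, ‖iteratedFDeriv ℝ 2 φ x‖ ≤ M₂) (u v : E) :
    |2 * φ u - φ (u + v) - φ (u - v)| ≤ min (4 * M₀) (2 * M₂ * ‖v‖ ^ 2) := by
  refine le_min ?_ (abs_two_mul_sub_sub_le hφ hM₂ u v)
  have := hM₀ u; have := hM₀ (u + v); have := hM₀ (u - v)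
  rw [abs_le] at *
  constructor <;> linarith

end SecondDifference

lemma integrableOn_Ioi_min_mul_rpow {A B s : ℝ} (hA : 0 ≤ A) (hB : 0 ≤ B) (hs0 : 0 < s)
    (hs1 : s < 1) :
    IntegrableOn (fun r : ℝ => min A (B * r ^ 2) * r ^ (-1 - 2 * s)) (Ioi 0) := by
  have hmeas : AEStronglyMeasurable (fun r : ℝ => min A (B * r ^ 2) * r ^ (-1 - 2 * s)) :=
    (by fun_prop : Measurable _).aestronglyMeasurable
  rw [← Ioc_union_Ioi_eq_Ioi zero_le_one]
  refine IntegrableOn.union ?_ ?_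
  · have hint : IntegrableOn (fun r : ℝ => r ^ (1 - 2 * s)) (Ioc 0 1) :=
      (intervalIntegral.intervalIntegrable_rpow' (show -1 < 1 - 2 * s by linarith)).1
    refine (hint.const_mul B).mono' hmeas.restrict
      (ae_restrict_of_forall_mem measurableSet_Ioc fun r hr => ?_)
    have hr0 : 0 < r := hr.1
    rw [Real.norm_of_nonneg (by positivity), show (1 - 2 * s) = 2 + (-1 - 2 * s) by ring,
      Real.rpow_add hr0, ← mul_assoc, Real.rpow_two]
    exact mul_le_mul_of_nonneg_right (min_le_right _ _) (by positivity)
  · have hint : IntegrableOn (fun r : ℝ => r ^ (-1 - 2 * s)) (Ioi 1) :=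
      integrableOn_Ioi_rpow_of_lt (by linarith) zero_lt_one
    refine (hint.const_mul A).mono' hmeas.restrict
      (ae_restrict_of_forall_mem measurableSet_Ioi fun r (hr : 1 < r) => ?_)
    rw [Real.norm_of_nonneg (by positivity)]
    exact mul_le_mul_of_nonneg_right (min_le_left _ _) (by positivity)

section HaarMeasure

variable {E : Type*} [NormedAddCommGroup E] [NormedSpace ℝ E] [MeasurableSpace E]
  [BorelSpace E] [FiniteDimensional ℝ E] (μ : Measure E) [μ.IsAddHaarMeasure]

lemma integrable_min_mul_norm_rpow [Nontrivial E] {A B s : ℝ} (hA : 0 ≤ A) (hB : 0 ≤ B)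
    (hs0 : 0 < s) (hs1 : s < 1) :
    Integrable (fun z : E => min A (B * ‖z‖ ^ 2) * ‖z‖ ^ (-(finrank ℝ E : ℝ) - 2 * s))
      μ := by
  rw [integrable_fun_norm_addHaar μ
    (f := fun r : ℝ => min A (B * r ^ 2) * r ^ (-(finrank ℝ E : ℝ) - 2 * s))]
  refine (integrableOn_Ioi_min_mul_rpow hA hB hs0 hs1).congr_fun
    (fun r (hr : 0 < r) => ?_) measurableSet_Ioi
  rw [smul_eq_mul, mul_left_comm, ← Real.rpow_natCast r (finrank ℝ E - 1),
    ← Real.rpow_add hr, Nat.cast_sub finrank_pos, Nat.cast_one]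
  ring_nf

lemma lintegral_comp_inv_smul {R : ℝ} (hR : R ≠ 0) (f : E → ℝ≥0∞) :
    ∫⁻ x, f (R⁻¹ • x) ∂μ = ENNReal.ofReal |R ^ finrank ℝ E| * ∫⁻ x, f x ∂μ := by
  have hR' : R⁻¹ ≠ 0 := inv_ne_zero hR
  calc ∫⁻ x, f (R⁻¹ • x) ∂μ = ∫⁻ x, f x ∂(μ.map (R⁻¹ • ·)) :=
        (lintegral_map_equiv f (Homeomorph.smul (Units.mk0 R⁻¹ hR')).toMeasurableEquiv).symm
    _ = _ := by
      rw [Measure.map_addHaar_smul μ hR', lintegral_smul_measure, smul_eq_mul, inv_pow, inv_inv]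

lemma lintegral_comp_inv_smul_mul_norm_rpow {R : ℝ} (hR : 0 < R) (f : E → ℝ≥0∞) (p : ℝ) :
    ∫⁻ y, f (R⁻¹ • y) * ENNReal.ofReal (‖y‖ ^ (-(finrank ℝ E : ℝ) - p)) ∂μ =
      ENNReal.ofReal (R ^ (-p)) *
        ∫⁻ z, f z * ENNReal.ofReal (‖z‖ ^ (-(finrank ℝ E : ℝ) - p)) ∂μ := by
  set q : ℝ := -(finrank ℝ E : ℝ) - p
  have hnorm (y : E) : ‖y‖ ^ q = R ^ q * ‖R⁻¹ • y‖ ^ q := by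
    rw [← Real.mul_rpow hR.le (norm_nonneg _), norm_smul,
      Real.norm_of_nonneg (inv_nonneg.2 hR.le), mul_inv_cancel_left₀ hR.ne']
  calc ∫⁻ y, f (R⁻¹ • y) * ENNReal.ofReal (‖y‖ ^ q) ∂μ
      = ∫⁻ y, ENNReal.ofReal (R ^ q) *
          (f (R⁻¹ • y) * ENNReal.ofReal (‖R⁻¹ • y‖ ^ q)) ∂μ :=
        lintegral_congr fun y => by
          rw [hnorm, ENNReal.ofReal_mul (by positivity), mul_left_comm]
    _ = ENNReal.ofReal (R ^ q) * ENNReal.ofReal (R ^ finrank ℝ E) *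
          ∫⁻ z, f z * ENNReal.ofReal (‖z‖ ^ q) ∂μ := by
      rw [lintegral_const_mul' _ _ ENNReal.ofReal_ne_top,
        lintegral_comp_inv_smul μ hR.ne' fun z => f z * ENNReal.ofReal (‖z‖ ^ q),
        abs_of_pos (by positivity), mul_assoc]
    _ = _ := by
      rw [← ENNReal.ofReal_mul (by positivity), ← Real.rpow_natCast, ← Real.rpow_add hR,
        show q + finrank ℝ E = -p by ring]

lemma exists_lintegral_min_mul_norm_rpow_eq [Nontrivial E] {A B s : ℝ} (hA : 0 ≤ A)
    (hB : 0 ≤ B) (hs0 : 0 < s) (hs1 : s < 1) :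
    ∃ K : ℝ, 0 ≤ K ∧ ∀ R : ℝ, 0 < R →
      ∫⁻ y, ENNReal.ofReal (min A (B * ‖R⁻¹ • y‖ ^ 2)) *
          ENNReal.ofReal (‖y‖ ^ (-(finrank ℝ E : ℝ) - 2 * s)) ∂μ =
        ENNReal.ofReal (K * R ^ (-(2 * s))) := by
  set I := ∫⁻ z, ENNReal.ofReal (min A (B * ‖z‖ ^ 2)) *
    ENNReal.ofReal (‖z‖ ^ (-(finrank ℝ E : ℝ) - 2 * s)) ∂μ
  have hI : I ≠ ∞ :=
    (lt_of_eq_of_lt (lintegral_congr fun _ => (ENNReal.ofReal_mul (by positivity)).symm)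
      (integrable_min_mul_norm_rpow μ hA hB hs0 hs1).lintegral_lt_top).ne
  refine ⟨I.toReal, ENNReal.toReal_nonneg, fun R hR => ?_⟩
  rw [lintegral_comp_inv_smul_mul_norm_rpow μ hR fun z => ENNReal.ofReal (min A (B * ‖z‖ ^ 2)),
    ENNReal.ofReal_mul ENNReal.toReal_nonneg, ENNReal.ofReal_toReal hI]
  exact mul_comm _ _

lemma exists_lintegral_le_rpow_add_rpow_of_le_min_mul [Nontrivial E] {A B c β δ : ℝ}
    (hA : 0 ≤ A) (hB : 0 ≤ B) (hc : 0 ≤ c) (hβ0 : 0 < β) (hβ1 : β < 1) (hδ0 : 0 < δ)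
    (hδ1 : δ < 1) :
    ∃ C : ℝ, 0 < C ∧ ∀ R : ℝ, 0 < R → ∀ g : E → ℝ, (∀ y, y ≠ 0 →
      g y ≤ min A (B * ‖R⁻¹ • y‖ ^ 2) * (c * (‖y‖ ^ (-(finrank ℝ E : ℝ) - 2 * β) +
        ‖y‖ ^ (-(finrank ℝ E : ℝ) - 2 * δ)))) →
      ∫⁻ y, ENNReal.ofReal (g y) ∂μ ≤
        ENNReal.ofReal (C * (R ^ (-(2 * β)) + R ^ (-(2 * δ)))) := by
  obtain ⟨Kβ, hKβ0, hKβ⟩ := exists_lintegral_min_mul_norm_rpow_eq μ hA hB hβ0 hβ1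
  obtain ⟨Kδ, hKδ0, hKδ⟩ := exists_lintegral_min_mul_norm_rpow_eq μ hA hB hδ0 hδ1
  refine ⟨c * (Kβ + Kδ) + 1, by positivity, fun R hR g hg => ?_⟩
  set m : E → ℝ := fun y => min A (B * ‖R⁻¹ • y‖ ^ 2)
  have hm0 (y : E) : 0 ≤ m y := by positivity
  calc ∫⁻ y, ENNReal.ofReal (g y) ∂μ
      ≤ ∫⁻ y, ENNReal.ofReal c *
          (ENNReal.ofReal (m y) * ENNReal.ofReal (‖y‖ ^ (-(finrank ℝ E : ℝ) - 2 * β)) +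
            ENNReal.ofReal (m y) * ENNReal.ofReal (‖y‖ ^ (-(finrank ℝ E : ℝ) - 2 * δ))) ∂μ := by
        refine lintegral_mono_ae ?_
        filter_upwards [compl_mem_ae_iff.2 (measure_singleton 0)] with y hy
        rw [← ENNReal.ofReal_mul (hm0 y), ← ENNReal.ofReal_mul (hm0 y),
          ← ENNReal.ofReal_add (by positivity) (by positivity), ← ENNReal.ofReal_mul hc]
        exact ENNReal.ofReal_le_ofReal ((hg y hy).trans_eq (by ring))
    _ = ENNReal.ofReal (c * (Kβ * R ^ (-(2 * β)) + Kδ * R ^ (-(2 * δ)))) := by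
      rw [lintegral_const_mul' _ _ ENNReal.ofReal_ne_top, lintegral_add_left (by fun_prop),
        hKβ R hR, hKδ R hR, ← ENNReal.ofReal_add (by positivity) (by positivity),
        ← ENNReal.ofReal_mul hc]
    _ ≤ ENNReal.ofReal ((c * (Kβ + Kδ) + 1) * (R ^ (-(2 * β)) + R ^ (-(2 * δ)))) := by
      refine ENNReal.ofReal_le_ofReal ?_
      have hRβ : 0 ≤ R ^ (-(2 * β)) := by positivity
      have hRδ : 0 ≤ R ^ (-(2 * δ)) := by positivity
      nlinarith [mul_nonneg hc (mul_nonneg hKβ0 hRδ), mul_nonneg hc (mul_nonneg hKδ0 hRβ)]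

end HaarMeasure

theorem levy_on_rescaled_test_function_general
    (n : ℕ) (hn : 1 ≤ n) (β δ c : ℝ)
    (hβ0 : 0 < β) (hβ : β ≤ 1 / 2) (hδ0 : 0 < δ) (hδ : δ ≤ 1 / 2) (hc : 0 < c)
    (π : EuclideanSpace ℝ (Fin n) → ℝ) (hπ0 : ∀ y, 0 ≤ π y)
    (hπub : ∀ y : EuclideanSpace ℝ (Fin n), y ≠ 0 →
      π y ≤ c * (‖y‖ ^ (-(n : ℝ) - 2 * β) + ‖y‖ ^ (-(n : ℝ) - 2 * δ)))
    (φ : EuclideanSpace ℝ (Fin n) → ℝ) (hφ : ContDiff ℝ 2 φ)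
    (M₀ M₂ : ℝ) (hM₀ : ∀ x, |φ x| ≤ M₀) (hM₂ : ∀ x, ‖iteratedFDeriv ℝ 2 φ x‖ ≤ M₂) :
    ∃ C : ℝ, 0 < C ∧ ∀ R : ℝ, 0 < R → ∀ x : EuclideanSpace ℝ (Fin n),
      ENNReal.ofReal (1 / 2) *
          (∫⁻ y, ENNReal.ofReal
            (|2 * φ (R⁻¹ • x) - φ (R⁻¹ • (x + y)) - φ (R⁻¹ • (x - y))| * π y))
        ≤ ENNReal.ofReal (C * (R ^ (-(2 * β)) + R ^ (-(2 * δ)))) := by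
  have : NeZero n := ⟨by omega⟩
  have hM₀0 : 0 ≤ M₀ := (abs_nonneg _).trans (hM₀ 0)
  have hM₂0 : 0 ≤ M₂ := (norm_nonneg _).trans (hM₂ 0)
  obtain ⟨C, hC, hbound⟩ := exists_lintegral_le_rpow_add_rpow_of_le_min_mul
    (volume : Measure (EuclideanSpace ℝ (Fin n))) (A := 4 * M₀) (B := 2 * M₂)
    (by positivity) (by positivity) hc.le hβ0 (by linarith) hδ0 (by linarith)
  rw [finrank_euclideanSpace_fin] at hbound
  refine ⟨C, hC, fun R hR x =>
    (mul_le_of_le_one_left' (ENNReal.ofReal_le_one.2 (by norm_num))).trans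
      (hbound R hR _ fun y hy => ?_)⟩
  have hΔ := abs_two_mul_sub_sub_le_min hφ hM₀ hM₂ (R⁻¹ • x) (R⁻¹ • y)
  rw [← smul_add, ← smul_sub] at hΔ
  exact mul_le_mul hΔ (hπub y hy) (hπ0 y) (by positivity)

/-- Bound `|𝓛 φ_R(x)| ≤ C (R^{-2β} + R^{-2δ})` for the (symmetrized) Lévy operator applied to
the rescaled test function `φ_R(x) = φ(x/R)`. -/
theorem levy_on_rescaled_test_function
    (n : ℕ) (hn : 1 ≤ n) (β δ c : ℝ)
    (hβ0 : 0 < β) (hβ : β ≤ 1 / 2) (hδ0 : 0 < δ) (hδ : δ ≤ 1 / 2) (hc : 0 < c)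
    (π : EuclideanSpace ℝ (Fin n) → ℝ) (hπmeas : Measurable π) (hπ0 : ∀ y, 0 ≤ π y)
    (hπub : ∀ y : EuclideanSpace ℝ (Fin n), y ≠ 0 →
      π y ≤ c * (‖y‖ ^ (-(n : ℝ) - 2 * β) + ‖y‖ ^ (-(n : ℝ) - 2 * δ)))
    (φ : EuclideanSpace ℝ (Fin n) → ℝ) (hφ : ContDiff ℝ 2 φ)
    (M₀ M₂ : ℝ) (hM₀ : ∀ x, |φ x| ≤ M₀) (hM₂ : ∀ x, ‖iteratedFDeriv ℝ 2 φ x‖ ≤ M₂) :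
    ∃ C : ℝ, 0 < C ∧ ∀ R : ℝ, 0 < R → ∀ x : EuclideanSpace ℝ (Fin n),
      ENNReal.ofReal (1 / 2) *
          (∫⁻ y, ENNReal.ofReal
            (|2 * φ (R⁻¹ • x) - φ (R⁻¹ • (x + y)) - φ (R⁻¹ • (x - y))| * π y))
        ≤ ENNReal.ofReal (C * (R ^ (-(2 * β)) + R ^ (-(2 * δ)))) :=
  levy_on_rescaled_test_function_general n hn β δ c hβ0 hβ hδ0 hδ hc π hπ0 hπub φ hφ M₀ M₂ hM₀ hM₂
end

section
/- Let n ≥ 1, let 0 < γ and 0 < ω < 1, let 0 < r, let x₀ ∈ ℝⁿ, and let g : ℝⁿ → ℝ be measurable with ∫_{ℝⁿ}|g(x)|dx ≤ r^{-γ} and |g(x)| ≤ r^{-(n+γ)} for almost every x. Then there exists a constant C > 0, depending only on n and ω, such that ∫_{ℝⁿ} ‖x − x₀‖^{ω−1} |g(x)| dx ≤ C r^{ω−1−γ}. -/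
open MeasureTheory Set Metric

lemma ball_rpow_lintegral_le (n : ℕ) (hn : 1 ≤ n) (ω : ℝ) (hω0 : 0 < ω) (hω1 : ω < 1)
    (r : ℝ) (hr : 0 < r) (x₀ : EuclideanSpace ℝ (Fin n)) :
    (∫⁻ x in Metric.ball x₀ r, ENNReal.ofReal (‖x - x₀‖ ^ (ω - 1)))
      ≤ ENNReal.ofReal ((volume (Metric.ball (0 : EuclideanSpace ℝ (Fin n)) 1)).toReal
          * (1 + (1 - ω) / ((n : ℝ) + ω - 1)) * r ^ ((n : ℝ) + ω - 1)) := by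
  have hω1' : ω - 1 < 0 := by linarith
  have hn1 : (1 : ℝ) ≤ n := by exact_mod_cast hn
  have hnω : 0 < (n : ℝ) + ω - 1 := by linarith
  have hfr : Module.finrank ℝ (EuclideanSpace ℝ (Fin n)) = n := finrank_euclideanSpace_fin
  set v1 := volume (Metric.ball (0 : EuclideanSpace ℝ (Fin n)) 1) with hv1
  have hv1top : v1 ≠ ⊤ := measure_ball_lt_top.ne
  set s : ℝ := (n : ℝ) * (ω - 1)⁻¹ with hs_def
  have hs : s < -1 := by
    rw [hs_def, ← div_eq_mul_inv, div_lt_iff_of_neg hω1']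
    nlinarith
  set c : ℝ := r ^ (ω - 1) with hc_def
  have hc : 0 < c := Real.rpow_pos_of_pos hr _
  have hmeas : Measurable fun x : EuclideanSpace ℝ (Fin n) => ‖x - x₀‖ ^ (ω - 1) := by
    fun_prop
  have key := lintegral_eq_lintegral_meas_le (volume.restrict (Metric.ball x₀ r))
    (f := fun x : EuclideanSpace ℝ (Fin n) => ‖x - x₀‖ ^ (ω - 1))
    (Filter.Eventually.of_forall fun x => Real.rpow_nonneg (norm_nonneg _) _)
    hmeas.aemeasurable
  rw [key]
  have hmset : ∀ t : ℝ, MeasurableSet {a : EuclideanSpace ℝ (Fin n) | t ≤ ‖a - x₀‖ ^ (ω - 1)} :=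
    fun t => hmeas measurableSet_Ici
  -- first bound: whole ball
  have hb1 : ∀ t ∈ Ioi (0 : ℝ),
      (volume.restrict (Metric.ball x₀ r)) {a | t ≤ ‖a - x₀‖ ^ (ω - 1)}
        ≤ ENNReal.ofReal (r ^ (n : ℕ)) * v1 := by
    intro t _
    rw [Measure.restrict_apply (hmset t)]
    calc volume ({a : EuclideanSpace ℝ (Fin n) | t ≤ ‖a - x₀‖ ^ (ω - 1)} ∩ Metric.ball x₀ r)
        ≤ volume (Metric.closedBall x₀ r) :=
          measure_mono (inter_subset_right.trans ball_subset_closedBall)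
      _ = ENNReal.ofReal (r ^ (n : ℕ)) * v1 := by
          rw [Measure.addHaar_closedBall _ _ hr.le, hfr]
  -- second bound: small closed ball
  have hb2 : ∀ t ∈ Ioi (0 : ℝ),
      (volume.restrict (Metric.ball x₀ r)) {a | t ≤ ‖a - x₀‖ ^ (ω - 1)}
        ≤ ENNReal.ofReal (t ^ s) * v1 := by
    intro t ht
    rw [Measure.restrict_apply (hmset t)]
    have hsub : {a : EuclideanSpace ℝ (Fin n) | t ≤ ‖a - x₀‖ ^ (ω - 1)} ∩ Metric.ball x₀ r
        ⊆ Metric.closedBall x₀ (t ^ (ω - 1)⁻¹) := by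
      rintro a ⟨ha, -⟩
      simp only [mem_setOf_eq] at ha
      rw [Metric.mem_closedBall, dist_eq_norm]
      rcases eq_or_lt_of_le (norm_nonneg (a - x₀)) with h0 | h0
      · rw [← h0]
        exact Real.rpow_nonneg (le_of_lt ht) _
      · have h2 := Real.rpow_le_rpow_of_nonpos ht ha (inv_nonpos.mpr hω1'.le)
        rwa [Real.rpow_rpow_inv (norm_nonneg _) hω1'.ne] at h2
    calc volume ({a : EuclideanSpace ℝ (Fin n) | t ≤ ‖a - x₀‖ ^ (ω - 1)} ∩ Metric.ball x₀ r)
        ≤ volume (Metric.closedBall x₀ (t ^ (ω - 1)⁻¹)) := measure_mono hsub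
      _ = ENNReal.ofReal ((t ^ (ω - 1)⁻¹) ^ (n : ℕ)) * v1 := by
          rw [Measure.addHaar_closedBall _ _ (Real.rpow_nonneg ht.le _), hfr]
      _ = ENNReal.ofReal (t ^ s) * v1 := by
          rw [← Real.rpow_natCast (t ^ (ω - 1)⁻¹) n, ← Real.rpow_mul ht.le, hs_def,
            mul_comm ((ω - 1)⁻¹) (n : ℝ)]
  have hA : (r ^ (n : ℕ)) * c = r ^ ((n : ℝ) + ω - 1) := by
    rw [hc_def, ← Real.rpow_natCast r n, ← Real.rpow_add hr, ← add_sub_assoc]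
  have hs1 : s + 1 = ((n : ℝ) + ω - 1) / (ω - 1) := by
    rw [hs_def]
    field_simp [hω1'.ne]
    ring
  have hB : -c ^ (s + 1) / (s + 1) = (1 - ω) / ((n : ℝ) + ω - 1) * r ^ ((n : ℝ) + ω - 1) := by
    have h1 : (ω - 1) * (s + 1) = (n : ℝ) + ω - 1 := by
      rw [hs1, mul_comm, div_mul_cancel₀ _ hω1'.ne]
    rw [hc_def, ← Real.rpow_mul hr.le, h1, hs1]
    field_simp
    ring
  calc ∫⁻ t in Ioi (0 : ℝ), (volume.restrict (Metric.ball x₀ r)) {a | t ≤ ‖a - x₀‖ ^ (ω - 1)}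
      ≤ (∫⁻ t in Ioc (0 : ℝ) c, (volume.restrict (Metric.ball x₀ r)) {a | t ≤ ‖a - x₀‖ ^ (ω - 1)})
        + ∫⁻ t in Ioi c, (volume.restrict (Metric.ball x₀ r)) {a | t ≤ ‖a - x₀‖ ^ (ω - 1)} := by
        rw [← Ioc_union_Ioi_eq_Ioi hc.le]
        exact lintegral_union_le _ _ _
    _ ≤ (ENNReal.ofReal (r ^ (n : ℕ)) * v1) * ENNReal.ofReal c
        + ENNReal.ofReal ((1 - ω) / ((n : ℝ) + ω - 1) * r ^ ((n : ℝ) + ω - 1)) * v1 := by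
        gcongr
        · calc (∫⁻ t in Ioc (0 : ℝ) c,
              (volume.restrict (Metric.ball x₀ r)) {a | t ≤ ‖a - x₀‖ ^ (ω - 1)})
              ≤ ∫⁻ _ in Ioc (0 : ℝ) c, ENNReal.ofReal (r ^ (n : ℕ)) * v1 :=
                setLIntegral_mono' measurableSet_Ioc fun t ht => hb1 t ht.1
            _ = (ENNReal.ofReal (r ^ (n : ℕ)) * v1) * ENNReal.ofReal c := by
                rw [setLIntegral_const, Real.volume_Ioc, sub_zero]
        · calc (∫⁻ t in Ioi c,
              (volume.restrict (Metric.ball x₀ r)) {a | t ≤ ‖a - x₀‖ ^ (ω - 1)})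
              ≤ ∫⁻ t in Ioi c, ENNReal.ofReal (t ^ s) * v1 :=
                setLIntegral_mono' measurableSet_Ioi fun t ht => hb2 t (hc.trans ht)
            _ = (∫⁻ t in Ioi c, ENNReal.ofReal (t ^ s)) * v1 :=
                lintegral_mul_const' _ _ hv1top
            _ = ENNReal.ofReal (∫ t in Ioi c, t ^ s) * v1 := by
                rw [ofReal_integral_eq_lintegral_ofReal (integrableOn_Ioi_rpow_of_lt hs hc) ?_]
                filter_upwards [ae_restrict_mem measurableSet_Ioi] with t ht
                exact Real.rpow_nonneg (hc.trans ht).le _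
            _ = ENNReal.ofReal ((1 - ω) / ((n : ℝ) + ω - 1) * r ^ ((n : ℝ) + ω - 1)) * v1 := by
                rw [integral_Ioi_rpow_of_lt hs hc, hB]
    _ ≤ ENNReal.ofReal (v1.toReal * (1 + (1 - ω) / ((n : ℝ) + ω - 1)) * r ^ ((n : ℝ) + ω - 1)) := by
        obtain ⟨V, hVnn, hv1eq⟩ : ∃ V : ℝ, 0 ≤ V ∧ v1 = ENNReal.ofReal V :=
          ⟨v1.toReal, ENNReal.toReal_nonneg, (ENNReal.ofReal_toReal hv1top).symm⟩
        have hc2 : 0 ≤ (1 - ω) / ((n : ℝ) + ω - 1) := div_nonneg (by linarith) hnω.le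
        have e1 : ENNReal.ofReal (r ^ (n : ℕ)) * ENNReal.ofReal V * ENNReal.ofReal c
            = ENNReal.ofReal (r ^ (n : ℕ) * V * c) := by
          rw [← ENNReal.ofReal_mul (pow_nonneg hr.le n),
            ← ENNReal.ofReal_mul (by positivity)]
        have e2 : ENNReal.ofReal ((1 - ω) / ((n : ℝ) + ω - 1) * r ^ ((n : ℝ) + ω - 1))
              * ENNReal.ofReal V
            = ENNReal.ofReal ((1 - ω) / ((n : ℝ) + ω - 1) * r ^ ((n : ℝ) + ω - 1) * V) :=
          (ENNReal.ofReal_mul (by positivity)).symm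
        rw [hv1eq, ENNReal.toReal_ofReal hVnn, e1, e2,
          ← ENNReal.ofReal_add (by positivity) (by positivity)]
        apply ENNReal.ofReal_le_ofReal
        apply le_of_eq
        linear_combination V * hA


/-- Estimate `∫ ‖x-x₀‖^{ω-1} |g(x)| dx ≤ C r^{ω-1-γ}` for an evolved `r`-molecule `g`
satisfying the `L¹` bound `r^{-γ}` and the `L^∞` bound `r^{-(n+γ)}`. -/
theorem molecule_weighted_estimate
    (n : ℕ) (hn : 1 ≤ n) (ω : ℝ) (hω0 : 0 < ω) (hω1 : ω < 1) :
    ∃ C : ℝ, 0 < C ∧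
      ∀ (γ r : ℝ) (x₀ : EuclideanSpace ℝ (Fin n)) (g : EuclideanSpace ℝ (Fin n) → ℝ),
        0 < γ → 0 < r → Measurable g →
        (∫⁻ x, ENNReal.ofReal |g x|) ≤ ENNReal.ofReal (r ^ (-γ)) →
        (∀ᵐ x : EuclideanSpace ℝ (Fin n) ∂volume, |g x| ≤ r ^ (-((n : ℝ) + γ))) →
        (∫⁻ x, ENNReal.ofReal (‖x - x₀‖ ^ (ω - 1) * |g x|))
          ≤ ENNReal.ofReal (C * r ^ (ω - 1 - γ)) := by
  have hn1 : (1 : ℝ) ≤ n := by exact_mod_cast hn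
  have hnω : 0 < (n : ℝ) + ω - 1 := by linarith
  set K : ℝ := (volume (Metric.ball (0 : EuclideanSpace ℝ (Fin n)) 1)).toReal
      * (1 + (1 - ω) / ((n : ℝ) + ω - 1)) with hK_def
  have hK : 0 ≤ K := by
    have h2 : 0 ≤ (1 - ω) / ((n : ℝ) + ω - 1) := div_nonneg (by linarith) hnω.le
    have := mul_nonneg (ENNReal.toReal_nonneg
      (a := volume (Metric.ball (0 : EuclideanSpace ℝ (Fin n)) 1))) (by linarith : (0:ℝ) ≤ 1 + (1 - ω) / ((n : ℝ) + ω - 1))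
    rw [hK_def]
    exact this
  refine ⟨K + 1, by linarith, ?_⟩
  intro γ r x₀ g hγ hr hgmeas hL1 hLinf
  have hωn : ω - 1 ≤ 0 := by linarith
  rw [← lintegral_add_compl (fun x => ENNReal.ofReal (‖x - x₀‖ ^ (ω - 1) * |g x|))
    (measurableSet_ball (x := x₀) (ε := r))]
  have h1 : (∫⁻ x in Metric.ball x₀ r, ENNReal.ofReal (‖x - x₀‖ ^ (ω - 1) * |g x|))
      ≤ ENNReal.ofReal (K * r ^ (ω - 1 - γ)) := by
    calc (∫⁻ x in Metric.ball x₀ r, ENNReal.ofReal (‖x - x₀‖ ^ (ω - 1) * |g x|))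
        ≤ ∫⁻ x in Metric.ball x₀ r,
            ENNReal.ofReal (r ^ (-((n : ℝ) + γ))) * ENNReal.ofReal (‖x - x₀‖ ^ (ω - 1)) := by
          refine lintegral_mono_ae ?_
          filter_upwards [ae_restrict_of_ae hLinf] with x hx
          rw [← ENNReal.ofReal_mul (Real.rpow_nonneg hr.le _)]
          apply ENNReal.ofReal_le_ofReal
          rw [mul_comm (r ^ (-((n : ℝ) + γ)))]
          exact mul_le_mul_of_nonneg_left hx (Real.rpow_nonneg (norm_nonneg _) _)
      _ = ENNReal.ofReal (r ^ (-((n : ℝ) + γ)))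
            * ∫⁻ x in Metric.ball x₀ r, ENNReal.ofReal (‖x - x₀‖ ^ (ω - 1)) :=
          lintegral_const_mul' _ _ ENNReal.ofReal_ne_top
      _ ≤ ENNReal.ofReal (r ^ (-((n : ℝ) + γ)))
            * ENNReal.ofReal (K * r ^ ((n : ℝ) + ω - 1)) := by
          gcongr
          exact ball_rpow_lintegral_le n hn ω hω0 hω1 r hr x₀
      _ = ENNReal.ofReal (K * r ^ (ω - 1 - γ)) := by
          rw [← ENNReal.ofReal_mul (Real.rpow_nonneg hr.le _)]
          congr 1
          rw [mul_comm (r ^ (-((n : ℝ) + γ))), mul_assoc, ← Real.rpow_add hr]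
          congr 2
          ring
  have h2 : (∫⁻ x in (Metric.ball x₀ r)ᶜ, ENNReal.ofReal (‖x - x₀‖ ^ (ω - 1) * |g x|))
      ≤ ENNReal.ofReal (1 * r ^ (ω - 1 - γ)) := by
    calc (∫⁻ x in (Metric.ball x₀ r)ᶜ, ENNReal.ofReal (‖x - x₀‖ ^ (ω - 1) * |g x|))
        ≤ ∫⁻ x in (Metric.ball x₀ r)ᶜ,
            ENNReal.ofReal (r ^ (ω - 1)) * ENNReal.ofReal |g x| := by
          refine setLIntegral_mono' measurableSet_ball.compl fun x hx => ?_
          rw [← ENNReal.ofReal_mul (Real.rpow_nonneg hr.le _)]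
          apply ENNReal.ofReal_le_ofReal
          have hxr : r ≤ ‖x - x₀‖ := by
            have := hx
            simp only [Set.mem_compl_iff, Metric.mem_ball, dist_eq_norm, not_lt] at this
            exact this
          exact mul_le_mul_of_nonneg_right
            (Real.rpow_le_rpow_of_nonpos hr hxr hωn) (abs_nonneg _)
      _ = ENNReal.ofReal (r ^ (ω - 1)) * ∫⁻ x in (Metric.ball x₀ r)ᶜ, ENNReal.ofReal |g x| :=
          lintegral_const_mul' _ _ ENNReal.ofReal_ne_top
      _ ≤ ENNReal.ofReal (r ^ (ω - 1)) * ENNReal.ofReal (r ^ (-γ)) := by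
          gcongr
          exact (setLIntegral_le_lintegral _ _).trans hL1
      _ = ENNReal.ofReal (1 * r ^ (ω - 1 - γ)) := by
          rw [← ENNReal.ofReal_mul (Real.rpow_nonneg hr.le _), ← Real.rpow_add hr, one_mul,
            sub_eq_add_neg (ω - 1) γ]
  calc (∫⁻ x in Metric.ball x₀ r, ENNReal.ofReal (‖x - x₀‖ ^ (ω - 1) * |g x|))
        + ∫⁻ x in (Metric.ball x₀ r)ᶜ, ENNReal.ofReal (‖x - x₀‖ ^ (ω - 1) * |g x|)
      ≤ ENNReal.ofReal (K * r ^ (ω - 1 - γ)) + ENNReal.ofReal (1 * r ^ (ω - 1 - γ)) :=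
        add_le_add h1 h2
    _ = ENNReal.ofReal ((K + 1) * r ^ (ω - 1 - γ)) := by
        rw [← ENNReal.ofReal_add (mul_nonneg hK (Real.rpow_nonneg hr.le _))
          (by rw [one_mul]; exact Real.rpow_nonneg hr.le _)]
        congr 1
        ring
end

section
/- Let n ≥ 1, 0 < ω < 1, m > 0, A > 0, x₀, x̄ ∈ ℝⁿ, R₁ > 0, ρ > 2 and R₂ = ρR₁. Let 𝒞(R₁,R₂) = {y ∈ ℝⁿ : R₁ ≤ ‖x̄ − y‖ ≤ R₂}, let ψ : ℝⁿ → ℝ be measurable, and let B₂ ⊆ 𝒞(R₁,R₂) be a measurable set such that |ψ(y)| ≥ m/2 for all y ∈ B₂ and ∫_{B₂} |ψ(y)| ‖y − x₀‖^ω dy ≤ A. If either ‖x̄ − x₀‖ > 2R₂ or ‖x̄ − x₀‖ < R₁/2, then the Lebesgue measure of B₂ satisfies |B₂| ≤ 2^{1+ω} A / (m R₁^ω). -/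
open MeasureTheory

/-- Measure bound for the subset `B₂` of the corona `𝒞(R₁,R₂)` on which `|ψ| ≥ m/2`, in the
cases `‖x̄-x₀‖ > 2R₂` or `‖x̄-x₀‖ < R₁/2`. -/
theorem corona_set_measure_bound_far
    (n : ℕ) (hn : 1 ≤ n) (ω m A : ℝ) (hω0 : 0 < ω) (hω1 : ω < 1)
    (hm : 0 < m) (hA : 0 < A)
    (x₀ xb : EuclideanSpace ℝ (Fin n)) (R₁ ρ R₂ : ℝ) (hR₁ : 0 < R₁) (hρ : 2 < ρ)
    (hR₂ : R₂ = ρ * R₁)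
    (ψ : EuclideanSpace ℝ (Fin n) → ℝ) (hψ : Measurable ψ)
    (B₂ : Set (EuclideanSpace ℝ (Fin n))) (hB₂ : MeasurableSet B₂)
    (hsub : B₂ ⊆ {y | R₁ ≤ ‖xb - y‖ ∧ ‖xb - y‖ ≤ R₂})
    (hlow : ∀ y ∈ B₂, m / 2 ≤ |ψ y|)
    (hconc : (∫⁻ y in B₂, ENNReal.ofReal (|ψ y| * ‖y - x₀‖ ^ ω)) ≤ ENNReal.ofReal A)
    (hcase : 2 * R₂ < ‖xb - x₀‖ ∨ ‖xb - x₀‖ < R₁ / 2) :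
    volume B₂ ≤ ENNReal.ofReal ((2 : ℝ) ^ (1 + ω) * A / (m * R₁ ^ ω)) := by
  have hR₂pos : 0 < R₂ := by nlinarith
  have hR₁R₂ : R₁ ≤ R₂ := by nlinarith
  set c : ℝ := m / 2 * (R₁ / 2) ^ ω with hc
  have hcpos : 0 < c := by
    have : (0:ℝ) < (R₁ / 2) ^ ω := Real.rpow_pos_of_pos (by linarith) ω
    positivity
  -- distance lower bound
  have hdist : ∀ y ∈ B₂, R₁ / 2 ≤ ‖y - x₀‖ := by
    intro y hy
    obtain ⟨h1, h2⟩ := hsub hy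
    rcases hcase with hfar | hnear
    · have htri : ‖xb - x₀‖ ≤ ‖xb - y‖ + ‖y - x₀‖ := norm_sub_le_norm_sub_add_norm_sub _ _ _
      linarith
    · have htri : ‖xb - y‖ ≤ ‖xb - x₀‖ + ‖x₀ - y‖ := norm_sub_le_norm_sub_add_norm_sub _ _ _
      have : ‖x₀ - y‖ = ‖y - x₀‖ := norm_sub_rev _ _
      linarith
  -- pointwise lower bound
  have hpt : ∀ y ∈ B₂, c ≤ |ψ y| * ‖y - x₀‖ ^ ω := by
    intro y hy
    have h1 := hlow y hy
    have h2 := hdist y hy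
    have h3 : (R₁ / 2) ^ ω ≤ ‖y - x₀‖ ^ ω :=
      Real.rpow_le_rpow (by linarith) h2 hω0.le
    have h4 : (0:ℝ) ≤ (R₁ / 2) ^ ω := (Real.rpow_pos_of_pos (by linarith) ω).le
    calc c = m / 2 * (R₁ / 2) ^ ω := rfl
      _ ≤ |ψ y| * ‖y - x₀‖ ^ ω := by
          apply mul_le_mul h1 h3 h4 (abs_nonneg _)
  have hmeas : Measurable fun y => ENNReal.ofReal (|ψ y| * ‖y - x₀‖ ^ ω) := by
    apply ENNReal.measurable_ofReal.comp
    exact (hψ.abs.mul ((measurable_id.sub_const x₀).norm.pow_const ω))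
  have hint : ENNReal.ofReal c * volume B₂ ≤ ENNReal.ofReal A := by
    calc ENNReal.ofReal c * volume B₂
        = ∫⁻ _ in B₂, ENNReal.ofReal c := (setLIntegral_const _ _).symm
      _ ≤ ∫⁻ y in B₂, ENNReal.ofReal (|ψ y| * ‖y - x₀‖ ^ ω) := by
          apply setLIntegral_mono hmeas
          intro y hy
          exact ENNReal.ofReal_le_ofReal (hpt y hy)
      _ ≤ ENNReal.ofReal A := hconc
  have hvol : volume B₂ ≤ ENNReal.ofReal A / ENNReal.ofReal c := by
    rw [ENNReal.le_div_iff_mul_le (Or.inl (by simp [ENNReal.ofReal_pos.mpr hcpos, ne_of_gt]))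
      (Or.inl ENNReal.ofReal_ne_top)]
    rwa [mul_comm]
  refine hvol.trans (le_of_eq ?_)
  rw [← ENNReal.ofReal_div_of_pos hcpos]
  congr 1
  have h2ω : (0:ℝ) < 2 ^ ω := Real.rpow_pos_of_pos two_pos ω
  have hR₁ω : (0:ℝ) < R₁ ^ ω := Real.rpow_pos_of_pos hR₁ ω
  rw [hc, Real.div_rpow hR₁.le two_pos.le, Real.rpow_add two_pos, Real.rpow_one]
  field_simp
end

section
/- Let n ≥ 1, let 0 < ω < 1 with ω < n, let m > 0, A > 0, x₀, x̄ ∈ ℝⁿ, R₁ > 0, ρ > 2 and R₂ = ρR₁. Let 𝒞(R₁,R₂) = {y ∈ ℝⁿ : R₁ ≤ ‖x̄ − y‖ ≤ R₂}, let ψ : ℝⁿ → ℝ be measurable, and let B₂ ⊆ 𝒞(R₁,R₂) be a measurable set such that |ψ(y)| ≥ m/2 for all y ∈ B₂ and ∫_{B₂} |ψ(y)| ‖y − x₀‖^ω dy ≤ A. If R₁/2 ≤ ‖x̄ − x₀‖ ≤ 2R₂, then there exists a constant C > 0, depending only on n, ω and ρ, such that the Lebesgue measure of B₂ satisfies |B₂|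 ≤ C (A R₁^{n−ω} / m)^{1/2}. -/
/-!
Put `t = A R₁^(n-ω) / m` and choose `r` with `r^n = √t`. If `r ≤ R₁`, split `B₂` along the ball
`closedBall x₀ r`: the part inside has volume `≲ r^n`, and outside it the weight
`|ψ y| ‖y - x₀‖^ω` is at least `(m/2) r^ω`, so by Chebyshev the rest has volume at most
`2A / (m r^ω) = 2 r^(2n) / (R₁^(n-ω) r^ω) ≤ 2 r^n`. If `r > R₁`, the corona already lies in a ball
of radius `ρ R₁ < ρ r`.
-/

open MeasureTheory Metric

noncomputable def unitBallVolume (n : ℕ) : ℝ := √Real.pi ^ n / Real.Gamma (n / 2 + 1)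

theorem unitBallVolume_pos (n : ℕ) : 0 < unitBallVolume n :=
  div_pos (pow_pos (Real.sqrt_pos.2 Real.pi_pos) n) (Real.Gamma_pos_of_pos (by positivity))

theorem EuclideanSpace.volume_closedBall_fin {n : ℕ} (hn : 1 ≤ n) (x : EuclideanSpace ℝ (Fin n))
    {r : ℝ} (hr : 0 ≤ r) :
    volume (closedBall x r) = ENNReal.ofReal (unitBallVolume n * r ^ n) := by
  have : Nonempty (Fin n) := ⟨⟨0, hn⟩⟩
  rw [EuclideanSpace.volume_closedBall, Fintype.card_fin, ← ENNReal.ofReal_pow hr,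
    ← ENNReal.ofReal_mul (by positivity), mul_comm, unitBallVolume]

theorem measure_le_closedBall_add_of_setLIntegral_le {E : Type*} [SeminormedAddCommGroup E]
    [MeasurableSpace E] [OpensMeasurableSpace E] {μ : Measure E} {s : Set E}
    (hs : MeasurableSet s) {f : E → ℝ} {x₀ : E} {c r ω A : ℝ} (hc : 0 < c) (hr : 0 < r)
    (hω : 0 ≤ ω) (hf : ∀ y ∈ s, c ≤ f y)
    (hA : ∫⁻ y in s, ENNReal.ofReal (f y * ‖y - x₀‖ ^ ω) ∂μ ≤ ENNReal.ofReal A) :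
    μ s ≤ μ (closedBall x₀ r) + ENNReal.ofReal (A / (c * r ^ ω)) := by
  have hcr : 0 < c * r ^ ω := mul_pos hc (Real.rpow_pos_of_pos hr ω)
  have hlower : ∀ y ∈ s \ closedBall x₀ r,
      ENNReal.ofReal (c * r ^ ω) ≤ ENNReal.ofReal (f y * ‖y - x₀‖ ^ ω) := by
    rintro y ⟨hys, hyr⟩
    have hry : r ≤ ‖y - x₀‖ := by
      rw [mem_closedBall, dist_eq_norm, not_le] at hyr
      exact hyr.le
    exact ENNReal.ofReal_le_ofReal (mul_le_mul (hf y hys) (Real.rpow_le_rpow hr.le hry hω)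
      (Real.rpow_nonneg hr.le ω) (hc.le.trans (hf y hys)))
  have hchebyshev : μ (s \ closedBall x₀ r) ≤ ENNReal.ofReal (A / (c * r ^ ω)) := by
    rw [ENNReal.ofReal_div_of_pos hcr,
      ENNReal.le_div_iff_mul_le (.inl (by positivity)) (.inl ENNReal.ofReal_ne_top)]
    calc μ (s \ closedBall x₀ r) * ENNReal.ofReal (c * r ^ ω)
        = ∫⁻ _ in s \ closedBall x₀ r, ENNReal.ofReal (c * r ^ ω) ∂μ := by
          rw [setLIntegral_const, mul_comm]
      _ ≤ ∫⁻ y in s \ closedBall x₀ r, ENNReal.ofReal (f y * ‖y - x₀‖ ^ ω) ∂μ :=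
          setLIntegral_mono' (hs.diff measurableSet_closedBall) hlower
      _ ≤ ∫⁻ y in s, ENNReal.ofReal (f y * ‖y - x₀‖ ^ ω) ∂μ :=
          lintegral_mono_set Set.sdiff_subset
      _ ≤ ENNReal.ofReal A := hA
  calc μ s ≤ μ (s ∩ closedBall x₀ r) + μ (s \ closedBall x₀ r) := measure_le_inter_add_sdiff _ _ _
    _ ≤ μ (closedBall x₀ r) + ENNReal.ofReal (A / (c * r ^ ω)) :=
        add_le_add (measure_mono Set.inter_subset_right) hchebyshev

theorem div_rpow_le_rpow_of_mul_rpow_sub_eq {a r R ω n : ℝ} (ha : 0 ≤ a) (hr : 0 < r)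
    (hrR : r ≤ R) (hωn : ω ≤ n) (h : a * R ^ (n - ω) = (r ^ n) ^ 2) : a / r ^ ω ≤ r ^ n := by
  have hsplit : r ^ ω * r ^ (n - ω) = r ^ n := by
    rw [← Real.rpow_add hr, add_sub_cancel]
  rw [div_le_iff₀ (Real.rpow_pos_of_pos hr ω)]
  refine le_of_mul_le_mul_right ?_ (Real.rpow_pos_of_pos hr (n - ω))
  calc a * r ^ (n - ω) ≤ a * R ^ (n - ω) :=
        mul_le_mul_of_nonneg_left (Real.rpow_le_rpow hr.le hrR (sub_nonneg.2 hωn)) ha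
    _ = r ^ n * r ^ ω * r ^ (n - ω) := by rw [h, mul_assoc, hsplit, sq]

theorem EuclideanSpace.volume_le_of_setLIntegral_rpow_le {n : ℕ} (hn : 1 ≤ n)
    {s : Set (EuclideanSpace ℝ (Fin n))} (hs : MeasurableSet s)
    {f : EuclideanSpace ℝ (Fin n) → ℝ} {x₀ : EuclideanSpace ℝ (Fin n)} {m A r R ω : ℝ}
    (hm : 0 < m) (hA : 0 ≤ A) (hr : 0 < r) (hrR : r ≤ R) (hω : 0 ≤ ω) (hωn : ω ≤ n)
    (hf : ∀ y ∈ s, m / 2 ≤ f y)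
    (hint : ∫⁻ y in s, ENNReal.ofReal (f y * ‖y - x₀‖ ^ ω) ≤ ENNReal.ofReal A)
    (hrn : A / m * R ^ ((n : ℝ) - ω) = (r ^ n) ^ 2) :
    volume s ≤ ENNReal.ofReal ((unitBallVolume n + 2) * r ^ n) := by
  have hdecay : A / (m / 2 * r ^ ω) ≤ 2 * r ^ n := by
    rw [← Real.rpow_natCast r n] at hrn ⊢
    calc A / (m / 2 * r ^ ω) = 2 * (A / m / r ^ ω) := by field_simp
      _ ≤ 2 * r ^ (n : ℝ) := by
          gcongr
          exact div_rpow_le_rpow_of_mul_rpow_sub_eq (div_nonneg hA hm.le) hr hrR hωn hrn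
  calc volume s ≤ volume (closedBall x₀ r) + ENNReal.ofReal (A / (m / 2 * r ^ ω)) :=
        measure_le_closedBall_add_of_setLIntegral_le hs (half_pos hm) hr hω hf hint
    _ ≤ ENNReal.ofReal (unitBallVolume n * r ^ n) + ENNReal.ofReal (2 * r ^ n) := by
        rw [EuclideanSpace.volume_closedBall_fin hn x₀ hr.le]
        gcongr
    _ = ENNReal.ofReal ((unitBallVolume n + 2) * r ^ n) := by
        rw [← ENNReal.ofReal_add (mul_nonneg (unitBallVolume_pos n).le (by positivity))
          (by positivity), add_mul]

theorem corona_set_measure_bound_near_general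
    (n : ℕ) (hn : 1 ≤ n) (ω ρ : ℝ) (hω0 : 0 < ω) (hωn : ω < n)
    (hρ : 2 < ρ) :
    ∃ C : ℝ, 0 < C ∧
      ∀ (m A : ℝ) (x₀ xb : EuclideanSpace ℝ (Fin n)) (R₁ : ℝ)
        (ψ : EuclideanSpace ℝ (Fin n) → ℝ) (B₂ : Set (EuclideanSpace ℝ (Fin n))),
        0 < m → 0 < A → 0 < R₁ → Measurable ψ → MeasurableSet B₂ →
        B₂ ⊆ {y | R₁ ≤ ‖xb - y‖ ∧ ‖xb - y‖ ≤ ρ * R₁} →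
        (∀ y ∈ B₂, m / 2 ≤ |ψ y|) →
        (∫⁻ y in B₂, ENNReal.ofReal (|ψ y| * ‖y - x₀‖ ^ ω)) ≤ ENNReal.ofReal A →
        R₁ / 2 ≤ ‖xb - x₀‖ → ‖xb - x₀‖ ≤ 2 * (ρ * R₁) →
        volume B₂ ≤ ENNReal.ofReal (C * (A * R₁ ^ ((n : ℝ) - ω) / m) ^ (1 / 2 : ℝ)) := by
  set v := unitBallVolume n
  have hρ0 : 0 < ρ := by linarith
  set C := max (v * ρ ^ n) (v + 2)
  have hC : 0 < C := lt_max_of_lt_right (by linarith [unitBallVolume_pos n])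
  refine ⟨C, hC, ?_⟩
  intro m A x₀ xb R₁ ψ B₂ hm hA hR₁ _ hB₂ hcorona hψ hint _ _
  set t := A * R₁ ^ ((n : ℝ) - ω) / m
  set r := √t ^ (n : ℝ)⁻¹
  have hr : 0 < r := by positivity
  have hrn : r ^ n = √t := by
    rw [← Real.rpow_natCast, Real.rpow_inv_rpow (Real.sqrt_nonneg t) (by positivity)]
  rw [← Real.sqrt_eq_rpow, ← hrn]
  rcases le_or_gt r R₁ with hrR | hRr
  · have hsq : A / m * R₁ ^ ((n : ℝ) - ω) = (r ^ n) ^ 2 := by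
      rw [hrn, Real.sq_sqrt (by positivity), div_mul_eq_mul_div]
    calc volume B₂ ≤ ENNReal.ofReal ((v + 2) * r ^ n) :=
          EuclideanSpace.volume_le_of_setLIntegral_rpow_le hn hB₂ hm hA.le hr hrR hω0.le hωn.le
            hψ hint hsq
      _ ≤ ENNReal.ofReal (C * r ^ n) := by
          gcongr
          exact le_max_right (v * ρ ^ n) (v + 2)
  · calc volume B₂ ≤ volume (closedBall xb (ρ * R₁)) := measure_mono fun y hy =>
          mem_closedBall'.2 ((dist_eq_norm xb y).trans_le (hcorona hy).2)
      _ = ENNReal.ofReal (v * ρ ^ n * R₁ ^ n) := by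
          rw [EuclideanSpace.volume_closedBall_fin hn xb (by positivity), mul_pow, mul_assoc]
      _ ≤ ENNReal.ofReal (C * r ^ n) := ENNReal.ofReal_le_ofReal <|
          mul_le_mul (le_max_left _ _) (pow_le_pow_left₀ hR₁.le hRr.le n) (by positivity) hC.le

/-- Measure bound for the subset `B₂` of the corona `𝒞(R₁,R₂)`, `R₂ = ρR₁`, on which
`|ψ| ≥ m/2`, in the case `R₁/2 ≤ ‖x̄-x₀‖ ≤ 2R₂`, via Cauchy–Schwarz. -/
theorem corona_set_measure_bound_near
    (n : ℕ) (hn : 1 ≤ n) (ω ρ : ℝ) (hω0 : 0 < ω) (hω1 : ω < 1) (hωn : ω < n)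
    (hρ : 2 < ρ) :
    ∃ C : ℝ, 0 < C ∧
      ∀ (m A : ℝ) (x₀ xb : EuclideanSpace ℝ (Fin n)) (R₁ : ℝ)
        (ψ : EuclideanSpace ℝ (Fin n) → ℝ) (B₂ : Set (EuclideanSpace ℝ (Fin n))),
        0 < m → 0 < A → 0 < R₁ → Measurable ψ → MeasurableSet B₂ →
        B₂ ⊆ {y | R₁ ≤ ‖xb - y‖ ∧ ‖xb - y‖ ≤ ρ * R₁} →
        (∀ y ∈ B₂, m / 2 ≤ |ψ y|) →
        (∫⁻ y in B₂, ENNReal.ofReal (|ψ y| * ‖y - x₀‖ ^ ω)) ≤ ENNReal.ofReal A →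
        R₁ / 2 ≤ ‖xb - x₀‖ → ‖xb - x₀‖ ≤ 2 * (ρ * R₁) →
        volume B₂ ≤ ENNReal.ofReal (C * (A * R₁ ^ ((n : ℝ) - ω) / m) ^ (1 / 2 : ℝ)) :=
  corona_set_measure_bound_near_general n hn ω ρ hω0 hωn hρ
end

section
/- Let n ≥ 1, let 0 < γ < ω, let r > 0, K > 0, T > 0, and let C ≥ K(n + γ). Let F : [0,T] → (0,∞) be differentiable with F(0) ≤ r^{-(n+γ)} and F′(s) ≤ −C (r + Ks)^{-(ω−γ)/(n+ω)} F(s)^{1 + 1/(n+ω)} for all s ∈ [0,T]. Then F(s) ≤ (r + Ks)^{-(n+γ)} for all s ∈ [0,T]. -/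
open Set

/-! With `q = 1/(n+ω)`, the substitution `G = F^{-q}` turns the Bernoulli-type inequality
`F' ≤ -c F^{1+q}` into the linear one `G' ≥ q c`. For `c(s) = C (r+Ks)^{-(ω-γ)/(n+ω)}` and
`C ≥ K(n+γ)`, `q c` dominates the derivative of the barrier `(r+Ks)^{(n+γ)/(n+ω)}`, which
lies below `G` at `s = 0`; the comparison principle keeps it below `G` on `[0,T]`, and raising
both sides to the power `-(n+ω)` gives the claim. -/

lemma le_rpow_neg_iff_rpow_mul_le_rpow_neg {x y p q : ℝ} (hx : 0 < x) (hy : 0 < y)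
    (hq : 0 < q) : x ≤ y ^ (-p) ↔ y ^ (p * q) ≤ x ^ (-q) := by
  have hpow : y ^ (-p) = (y ^ (p * q)) ^ (-q)⁻¹ := by
    rw [← Real.rpow_mul hy.le]
    congr 1
    field_simp
  rw [hpow, Real.le_rpow_inv_iff_of_neg hx (by positivity) (neg_neg_of_pos hq)]

theorem le_rpow_neg_of_deriv_le_neg_mul_rpow {F F' G G' c : ℝ → ℝ} {a b q : ℝ}
    (hq : 0 ≤ q)
    (hF : ∀ s ∈ Icc a b, HasDerivWithinAt F (F' s) (Icc a b) s)
    (hFpos : ∀ s ∈ Icc a b, 0 < F s) (hFc : ∀ s ∈ Ico a b, F' s ≤ -c s * F s ^ (1 + q))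
    (hG : ∀ s ∈ Icc a b, HasDerivWithinAt G (G' s) (Icc a b) s)
    (hGc : ∀ s ∈ Ico a b, G' s ≤ q * c s) (ha : G a ≤ F a ^ (-q)) :
    ∀ s ∈ Icc a b, G s ≤ F s ^ (-q) := by
  have hFq : ∀ s ∈ Icc a b,
      HasDerivWithinAt (fun t ↦ F t ^ (-q)) (F' s * -q * F s ^ (-q - 1)) (Icc a b) s :=
    fun s hs ↦ (hF s hs).rpow_const (Or.inl (hFpos s hs).ne')
  have hIci {f f' : ℝ → ℝ} (hf : ∀ s ∈ Icc a b, HasDerivWithinAt f (f' s) (Icc a b) s)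
      (s : ℝ) (hs : s ∈ Ico a b) : HasDerivWithinAt f (f' s) (Ici s) s :=
    (hf s (Ico_subset_Icc_self hs)).mono_of_mem_nhdsWithin (Icc_mem_nhdsGE_of_mem hs)
  refine image_le_of_deriv_right_le_deriv_boundary (fun s hs ↦ (hG s hs).continuousWithinAt)
    (hIci hG) ha (fun s hs ↦ (hFq s hs).continuousWithinAt) (hIci hFq)
    fun s hs ↦ (hGc s hs).trans ?_
  have hFs := hFpos s (Ico_subset_Icc_self hs)
  have hcancel : F s ^ (1 + q) * F s ^ (-q - 1) = 1 := by
    rw [← Real.rpow_add hFs, show 1 + q + (-q - 1) = 0 by ring, Real.rpow_zero]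
  calc q * c s = -c s * F s ^ (1 + q) * -q * F s ^ (-q - 1) := by
        linear_combination -(q * c s) * hcancel
    _ ≤ F' s * -q * F s ^ (-q - 1) :=
        mul_le_mul_of_nonneg_right (mul_le_mul_of_nonpos_right (hFc s hs) (neg_nonpos.2 hq))
          (by positivity)

theorem height_ODE_comparison_general
    (n : ℕ) (γ ω r K T C : ℝ)
    (hγ0 : 0 < γ) (hγω : γ < ω) (hr : 0 < r) (hK : 0 < K)
    (hC : K * ((n : ℝ) + γ) ≤ C)
    (F F' : ℝ → ℝ)
    (hderiv : ∀ s ∈ Set.Icc (0 : ℝ) T, HasDerivWithinAt F (F' s) (Set.Icc (0 : ℝ) T) s)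
    (hpos : ∀ s ∈ Set.Icc (0 : ℝ) T, 0 < F s)
    (h0 : F 0 ≤ r ^ (-((n : ℝ) + γ)))
    (hF' : ∀ s ∈ Set.Icc (0 : ℝ) T,
      F' s ≤ -C * (r + K * s) ^ (-(ω - γ) / ((n : ℝ) + ω)) *
        F s ^ (1 + 1 / ((n : ℝ) + ω))) :
    ∀ s ∈ Set.Icc (0 : ℝ) T, F s ≤ (r + K * s) ^ (-((n : ℝ) + γ)) := by
  set N : ℝ := n + ω
  set p : ℝ := n + γ
  have hN : 0 < N := by have := hγ0.trans hγω; positivity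
  have hbase : ∀ s ∈ Icc 0 T, 0 < r + K * s := fun s hs ↦ by have := hs.1; positivity
  have hexp : p * (1 / N) - 1 = -(ω - γ) / N := by field_simp; ring
  intro s hs
  have h0T : (0 : ℝ) ∈ Icc 0 T := ⟨le_rfl, hs.1.trans hs.2⟩
  rw [le_rpow_neg_iff_rpow_mul_le_rpow_neg (q := 1 / N) (hpos s hs) (hbase s hs) (by positivity)]
  refine le_rpow_neg_of_deriv_le_neg_mul_rpow (G := fun t ↦ (r + K * t) ^ (p * (1 / N)))
    (G' := fun t ↦ K * (p * (1 / N)) * (r + K * t) ^ (p * (1 / N) - 1))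
    (c := fun t ↦ C * (r + K * t) ^ (-(ω - γ) / N)) (q := 1 / N) (by positivity) hderiv hpos
    (fun t ht ↦ (hF' t (Ico_subset_Icc_self ht)).trans_eq (by ring)) (fun t ht ↦ ?_)
    (fun t ht ↦ ?_) ?_ s hs
  · simpa only [mul_one, id_eq] using ((((hasDerivAt_id t).const_mul K).const_add r).rpow_const
      (Or.inl (hbase t ht).ne')).hasDerivWithinAt
  · have := hbase t (Ico_subset_Icc_self ht)
    calc K * (p * (1 / N)) * (r + K * t) ^ (p * (1 / N) - 1)
        = K * p * (1 / N * (r + K * t) ^ (-(ω - γ) / N)) := by rw [hexp]; ring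
      _ ≤ C * (1 / N * (r + K * t) ^ (-(ω - γ) / N)) := by gcongr
      _ = 1 / N * (C * (r + K * t) ^ (-(ω - γ) / N)) := by ring
  · simpa only [mul_zero, add_zero] using
      (le_rpow_neg_iff_rpow_mul_le_rpow_neg (q := 1 / N) (hpos 0 h0T) hr (by positivity)).1 h0

/-- ODE comparison argument for the height condition: a positive differentiable function on
`[0,T]` with `F(0) ≤ r^{-(n+γ)}` satisfying
`F' ≤ -C (r+Ks)^{-(ω-γ)/(n+ω)} F^{1+1/(n+ω)}` with `C ≥ K(n+γ)` stays below
`(r+Ks)^{-(n+γ)}`. -/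
theorem height_ODE_comparison
    (n : ℕ) (hn : 1 ≤ n) (γ ω r K T C : ℝ)
    (hγ0 : 0 < γ) (hγω : γ < ω) (hr : 0 < r) (hK : 0 < K) (hT : 0 < T)
    (hC : K * ((n : ℝ) + γ) ≤ C)
    (F F' : ℝ → ℝ)
    (hderiv : ∀ s ∈ Set.Icc (0 : ℝ) T, HasDerivWithinAt F (F' s) (Set.Icc (0 : ℝ) T) s)
    (hpos : ∀ s ∈ Set.Icc (0 : ℝ) T, 0 < F s)
    (h0 : F 0 ≤ r ^ (-((n : ℝ) + γ)))
    (hF' : ∀ s ∈ Set.Icc (0 : ℝ) T,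
      F' s ≤ -C * (r + K * s) ^ (-(ω - γ) / ((n : ℝ) + ω)) *
        F s ^ (1 + 1 / ((n : ℝ) + ω))) :
    ∀ s ∈ Set.Icc (0 : ℝ) T, F s ≤ (r + K * s) ^ (-((n : ℝ) + γ)) :=
  height_ODE_comparison_general n γ ω r K T C hγ0 hγω hr hK hC F F' hderiv hpos h0 hF'
end

section
/- Let n ≥ 1, let p ≥ 2 be a real number, and let π : ℝⁿ → ℝ be measurable with π ≥ 0. Then for every measurable f : ℝⁿ → ℝ, (4(p−1)/p²) ∫_{ℝⁿ} ∫_{ℝⁿ} (|f(x)|^{p/2} − |f(y)|^{p/2})² π(x−y) dx dy ≤ ∫_{ℝⁿ} ∫_{ℝⁿ} (f(x) − f(y)) (|f(x)|^{p−2} f(x) − |f(y)|^{p−2} f(y)) π(x−y) dx dy, both integrands being pointwise nonnegative and both sides being allowed to be infinite. -/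
/-!
Expanding, `(a - b) (|a|^(p-2) a - |b|^(p-2) b) = |a|^p + |b|^p - a b (|a|^(p-2) + |b|^(p-2))`,
so for `a b ≤ 0` the pointwise inequality holds because `4(p-1)/p² ≤ 1`. For `a b > 0` it reduces
to `α β (A - B)² ≤ (A^α - B^α) (A^β - B^β)` for `A, B > 0`, `α + β = 2`
(with `A = |a|^(p/2)`, `α = 2/p`). Writing `A = e^u`, `B = e^v` this becomes
`α β sinh² d ≤ sinh (α d) sinh (β d)`, which for `α = 1 - δ`, `β = 1 + δ` is
`sinh² (δ d) ≤ δ² sinh² d`, a consequence of the convexity of `sinh` on `[0, ∞)`.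
Integrating against `π (x - y) ≥ 0` gives the theorem.
-/

namespace Real

theorem convexOn_sinh_Ici : ConvexOn ℝ (Set.Ici 0) sinh :=
  MonotoneOn.convexOn_of_deriv (convex_Ici 0) continuous_sinh.continuousOn
    differentiable_sinh.differentiableOn
    (by rw [deriv_sinh, interior_Ici]
        exact cosh_strictMonoOn.monotoneOn.mono Set.Ioi_subset_Ici_self)

theorem sinh_mul_le_mul_sinh {δ x : ℝ} (hδ₀ : 0 ≤ δ) (hδ₁ : δ ≤ 1) (hx : 0 ≤ x) :
    sinh (δ * x) ≤ δ * sinh x := by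
  simpa using convexOn_sinh_Ici.2 (Set.mem_Ici.2 hx) Set.self_mem_Ici hδ₀ (sub_nonneg.2 hδ₁)
    (add_sub_cancel δ 1)

theorem sinh_mul_sq_le {δ : ℝ} (hδ : |δ| ≤ 1) (x : ℝ) :
    sinh (δ * x) ^ 2 ≤ δ ^ 2 * sinh x ^ 2 := by
  have h := sinh_mul_le_mul_sinh (abs_nonneg δ) hδ (abs_nonneg x)
  rw [← abs_mul, ← abs_sinh, ← abs_sinh] at h
  rw [← sq_abs (sinh _), ← sq_abs (sinh x), ← sq_abs δ, ← mul_pow]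
  exact pow_le_pow_left₀ (abs_nonneg _) h 2

theorem exp_sub_exp (x y : ℝ) : exp x - exp y = 2 * exp ((x + y) / 2) * sinh ((x - y) / 2) := by
  have hx : exp x = exp ((x + y) / 2) * exp ((x - y) / 2) := by rw [← exp_add]; ring_nf
  have hy : exp y = exp ((x + y) / 2) * exp (-((x - y) / 2)) := by rw [← exp_add]; ring_nf
  rw [hx, hy, sinh_eq]
  ring

theorem mul_mul_sinh_sq_le_sinh_mul_mul_sinh_mul {α β : ℝ} (hα : 0 ≤ α) (hβ : 0 ≤ β)
    (hαβ : α + β = 2) (d : ℝ) :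
    α * β * sinh d ^ 2 ≤ sinh (α * d) * sinh (β * d) := by
  obtain ⟨δ, rfl, rfl⟩ : ∃ δ, α = 1 - δ ∧ β = 1 + δ := ⟨1 - α, by ring, by linarith⟩
  have hδ : |δ| ≤ 1 := abs_le.2 ⟨by linarith, by linarith⟩
  rw [show (1 - δ) * d = d - δ * d by ring, show (1 + δ) * d = d + δ * d by ring, sinh_sub,
    sinh_add]
  nlinarith [sinh_mul_sq_le hδ d, cosh_sq d, cosh_sq (δ * d)]

theorem mul_sq_sub_le_rpow_sub_mul_rpow_sub {α β A B : ℝ} (hα : 0 ≤ α) (hβ : 0 ≤ β)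
    (hαβ : α + β = 2) (hA : 0 < A) (hB : 0 < B) :
    α * β * (A - B) ^ 2 ≤ (A ^ α - B ^ α) * (A ^ β - B ^ β) := by
  obtain ⟨u, rfl⟩ : ∃ u, exp u = A := ⟨log A, exp_log hA⟩
  obtain ⟨v, rfl⟩ : ∃ v, exp v = B := ⟨log B, exp_log hB⟩
  have hmid : exp ((u * α + v * α) / 2) * exp ((u * β + v * β) / 2) = exp ((u + v) / 2) ^ 2 := by
    rw [← exp_add, sq, ← exp_add]
    congr 1
    linear_combination (u + v) / 2 * hαβ
  simp only [← exp_mul, exp_sub_exp]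
  calc α * β * (2 * exp ((u + v) / 2) * sinh ((u - v) / 2)) ^ 2
      = 4 * exp ((u + v) / 2) ^ 2 * (α * β * sinh ((u - v) / 2) ^ 2) := by ring
    _ ≤ 4 * exp ((u + v) / 2) ^ 2 * (sinh (α * ((u - v) / 2)) * sinh (β * ((u - v) / 2))) :=
      mul_le_mul_of_nonneg_left (mul_mul_sinh_sq_le_sinh_mul_mul_sinh_mul hα hβ hαβ _)
        (by positivity)
    _ = _ := by rw [← hmid]; ring_nf

theorem mul_sq_rpow_half_sub_le {p A B : ℝ} (hp : 1 ≤ p) (hA : 0 < A) (hB : 0 < B) :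
    4 * (p - 1) / p ^ 2 * (A ^ (p / 2) - B ^ (p / 2)) ^ 2
      ≤ (A - B) * (A ^ (p - 1) - B ^ (p - 1)) := by
  have hp₀ : p ≠ 0 := by positivity
  have h := mul_sq_sub_le_rpow_sub_mul_rpow_sub (α := 2 / p) (β := 2 * (p - 1) / p)
    (by positivity) (div_nonneg (by linarith) (by positivity)) (by field_simp; ring)
    (rpow_pos_of_pos hA (p / 2)) (rpow_pos_of_pos hB (p / 2))
  have hinv : ∀ C : ℝ, 0 < C → (C ^ (p / 2)) ^ (2 / p) = C := fun C hC => by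
    rw [← rpow_mul hC.le, div_mul_div_comm, mul_comm, div_self (by positivity),
      rpow_one]
  have hpow : ∀ C : ℝ, 0 < C → (C ^ (p / 2)) ^ (2 * (p - 1) / p) = C ^ (p - 1) := fun C hC => by
    rw [← rpow_mul hC.le]
    congr 1
    field_simp
  rw [hinv A hA, hinv B hB, hpow A hA, hpow B hB] at h
  convert h using 2
  ring

end Real

theorem strook_varopoulos_pointwise {p : ℝ} (hp : 1 ≤ p) (a b : ℝ) :
    4 * (p - 1) / p ^ 2 * (|a| ^ (p / 2) - |b| ^ (p / 2)) ^ 2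
      ≤ (a - b) * (|a| ^ (p - 2) * a - |b| ^ (p - 2) * b) := by
  have hsq : ∀ c : ℝ, (|c| ^ (p / 2)) ^ 2 = |c| ^ (p - 2) * c * c := fun c => by
    rw [mul_assoc, ← sq, ← sq_abs c, ← Real.rpow_mul_natCast (abs_nonneg c),
      ← Real.rpow_add_natCast' (abs_nonneg c) (by push_cast; linarith)]
    congr 1
    push_cast
    ring
  have hc₁ : 4 * (p - 1) / p ^ 2 ≤ 1 := by
    rw [div_le_one (by positivity)]
    nlinarith [sq_nonneg (p - 2)]
  rcases le_or_gt (a * b) 0 with hab | hab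
  · have hcross : a * b * (|a| ^ (p - 2) + |b| ^ (p - 2)) ≤ 0 :=
      mul_nonpos_of_nonpos_of_nonneg hab (by positivity)
    nlinarith [hsq a, hsq b,
      mul_le_mul_of_nonneg_right hc₁ (sq_nonneg (|a| ^ (p / 2) - |b| ^ (p / 2))),
      mul_nonneg (Real.rpow_nonneg (abs_nonneg a) (p / 2))
        (Real.rpow_nonneg (abs_nonneg b) (p / 2))]
  · have hab' : a * b = |a| * |b| := by rw [← abs_mul, abs_of_pos hab]
    have hA : 0 < |a| := abs_pos.2 (left_ne_zero_of_mul hab.ne')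
    have hB : 0 < |b| := abs_pos.2 (right_ne_zero_of_mul hab.ne')
    have hpow : ∀ C : ℝ, 0 < C → C ^ (p - 1) = C ^ (p - 2) * C := fun C hC => by
      rw [← Real.rpow_add_one hC.ne']
      ring_nf
    have h := Real.mul_sq_rpow_half_sub_le hp hA hB
    rw [hpow _ hA, hpow _ hB] at h
    linear_combination h + |a| ^ (p - 2) * sq_abs a + |b| ^ (p - 2) * sq_abs b
      + (|a| ^ (p - 2) + |b| ^ (p - 2)) * hab'

theorem strook_varopoulos_general
    (n : ℕ) (p : ℝ) (hp : 2 ≤ p)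
    (π : EuclideanSpace ℝ (Fin n) → ℝ) (hπ0 : ∀ y, 0 ≤ π y)
    (f : EuclideanSpace ℝ (Fin n) → ℝ) :
    ENNReal.ofReal (4 * (p - 1) / p ^ 2) *
        (∫⁻ x, ∫⁻ y, ENNReal.ofReal
          ((|f x| ^ (p / 2) - |f y| ^ (p / 2)) ^ 2 * π (x - y)))
      ≤ ∫⁻ x, ∫⁻ y, ENNReal.ofReal
          ((f x - f y) * (|f x| ^ (p - 2) * f x - |f y| ^ (p - 2) * f y) * π (x - y)) := by
  have hc₀ : 0 ≤ 4 * (p - 1) / p ^ 2 := div_nonneg (by linarith) (by positivity)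
  rw [← MeasureTheory.lintegral_const_mul' _ _ ENNReal.ofReal_ne_top]
  refine MeasureTheory.lintegral_mono fun x => ?_
  rw [← MeasureTheory.lintegral_const_mul' _ _ ENNReal.ofReal_ne_top]
  refine MeasureTheory.lintegral_mono fun y => ?_
  rw [← ENNReal.ofReal_mul hc₀, ← mul_assoc]
  exact ENNReal.ofReal_le_ofReal <|
    mul_le_mul_of_nonneg_right (strook_varopoulos_pointwise (by linarith) _ _) (hπ0 _)

/-- Strook–Varopoulos inequality in symmetric bilinear form for a Lévy operator with
nonnegative kernel `π`:
`(4(p-1)/p²) ∫∫ (|f(x)|^{p/2}-|f(y)|^{p/2})² π(x-y) ≤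
  ∫∫ (f(x)-f(y))(|f(x)|^{p-2}f(x)-|f(y)|^{p-2}f(y)) π(x-y)`. -/
theorem strook_varopoulos
    (n : ℕ) (hn : 1 ≤ n) (p : ℝ) (hp : 2 ≤ p)
    (π : EuclideanSpace ℝ (Fin n) → ℝ) (hπmeas : Measurable π) (hπ0 : ∀ y, 0 ≤ π y)
    (f : EuclideanSpace ℝ (Fin n) → ℝ) (hfmeas : Measurable f) :
    ENNReal.ofReal (4 * (p - 1) / p ^ 2) *
        (∫⁻ x, ∫⁻ y, ENNReal.ofReal
          ((|f x| ^ (p / 2) - |f y| ^ (p / 2)) ^ 2 * π (x - y)))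
      ≤ ∫⁻ x, ∫⁻ y, ENNReal.ofReal
          ((f x - f y) * (|f x| ^ (p - 2) * f x - |f y| ^ (p - 2) * f y) * π (x - y)) :=
  strook_varopoulos_general n p hp π hπ0 f
end
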